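/- arXiv:1309.4602 — 9 statements merged into one kernel-verified Lean document; each statement's English description precedes it below -/
import Mathlib

section
/- Let r ≥ 1 be an integer, C a finite set with |C| ≥ r, and Z a finite nonempty set such that binom(|C|, r) · r^r · (1 − r^{−r})^{|Z|} < 1. Then there exists an (r,C)-partition system on the ground set Z. -/
open Finset


/-- **Existence of partition systems.**
Let `r ≥ 1`, `C` a finite set with `|C| ≥ r`, and `Z` a finite nonempty set such that
`binom(|C|, r) · r^r · (1 − r^{−r})^{|Z|} < 1`. Then there exists an `(r,C)`-partition
system on the ground set `Z`: a family `{A c}_{c ∈ C}` where each `A c = (A c 1, …, A c r)`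
is a partition of `Z` into `r` pairwise disjoint parts with union `Z`, such that for any
`r` distinct indices `c₁, …, c_r ∈ C` and any (not necessarily distinct) `j₁, …, j_r`,
`A c₁ j₁ ∩ ⋯ ∩ A c_r j_r ≠ ∅`. -/
theorem stmt0 {r : ℕ} (hr : 1 ≤ r) {C Z : Type} [Fintype C] [Fintype Z] [Nonempty Z]
    (hC : r ≤ Fintype.card C)
    (hprob : ((Fintype.card C).choose r : ℝ) * (r : ℝ) ^ r *
      (1 - 1 / (r : ℝ) ^ r) ^ (Fintype.card Z) < 1) :
    ∃ A : C → Fin r → Set Z,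
      (∀ c : C, (⋃ j : Fin r, A c j) = Set.univ) ∧
      (∀ c : C, ∀ j j' : Fin r, j ≠ j' → Disjoint (A c j) (A c j')) ∧
      (∀ cs : Fin r → C, Function.Injective cs → ∀ js : Fin r → Fin r,
        (⋂ i : Fin r, A (cs i) (js i)).Nonempty) := by
  classical
  set n := Fintype.card C with hn
  set m := Fintype.card Z with hm
  have key : ∃ F : Z → C → Fin r, ∀ cs : Fin r → C, Function.Injective cs →
      ∀ js : Fin r → Fin r, ∃ z, ∀ i, F z (cs i) = js i := by
    -- index type
    let I := Σ s : {s : Finset C // s.card = r}, (↥s.1 → Fin r)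
    let badE : I → Finset (Z → C → Fin r) := fun p =>
      univ.filter fun F => ∀ z, ∃ c : ↥p.1.1, F z c.1 ≠ p.2 c
    let bad : Finset (Z → C → Fin r) :=
      univ.filter fun F => ∃ cs : Fin r → C, Function.Injective cs ∧
        ∃ js : Fin r → Fin r, ∀ z, ∃ i, F z (cs i) ≠ js i
    have hsub : bad ⊆ univ.biUnion badE := by
      intro F hF
      simp only [bad, mem_filter, mem_univ, true_and] at hF
      obtain ⟨cs, hinj, js, hzs⟩ := hF
      have hscard : (Finset.image cs univ).card = r := by
        rw [Finset.card_image_of_injective _ hinj, card_univ, Fintype.card_fin]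
      have : Nonempty (Fin r) := ⟨⟨0, hr⟩⟩
      refine mem_biUnion.2 ⟨⟨⟨Finset.image cs univ, hscard⟩,
        fun c => js (Function.invFun cs c.1)⟩, mem_univ _, ?_⟩
      simp only [badE, mem_filter, mem_univ, true_and]
      intro z
      obtain ⟨i, hi⟩ := hzs z
      refine ⟨⟨cs i, Finset.mem_image.2 ⟨i, mem_univ _, rfl⟩⟩, ?_⟩
      show F z (cs i) ≠ js (Function.invFun cs (cs i))
      rw [Function.leftInverse_invFun hinj i]
      exact hi
    have hcard : ∀ p : I, (badE p).card ≤ (r ^ n - r ^ (n - r)) ^ m := by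
      rintro ⟨s, t⟩
      let S : Finset (C → Fin r) := univ.filter fun g => ∃ c : ↥s.1, g c.1 ≠ t c
      have h1 : (badE ⟨s, t⟩).card = S.card ^ m := by
        have e1 : (badE ⟨s, t⟩).card = Fintype.card {F : Z → C → Fin r // ∀ z, F z ∈ S} := by
          rw [Fintype.card_subtype]
          congr 1
          apply filter_congr
          intro F _
          simp only [S, mem_filter, mem_univ, true_and]
        rw [e1, Fintype.card_congr (Equiv.subtypePiEquivPi (p := fun _ g => g ∈ S)),
          Fintype.card_pi]
        simp [Fintype.card_coe, hm]
      have hT : (univ.filter fun g : C → Fin r => ∀ c : ↥s.1, g c.1 = t c).card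
          = r ^ (n - r) := by
        rw [← Fintype.card_subtype]
        let e : {g : C → Fin r // ∀ c : ↥s.1, g c.1 = t c} ≃ ({c : C // c ∉ s.1} → Fin r) :=
          { toFun := fun g c => g.1 c.1
            invFun := fun h => ⟨fun c => if hc : c ∈ s.1 then t ⟨c, hc⟩ else h ⟨c, hc⟩, by
              intro c; simp [c.2]⟩
            left_inv := by
              rintro ⟨g, hg⟩
              apply Subtype.ext
              funext c
              by_cases hc : c ∈ s.1
              · simp [hc, (hg ⟨c, hc⟩).symm]
              · simp [hc]
            right_inv := by
              intro h; funext c; simp [c.2] }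
        rw [Fintype.card_congr e, Fintype.card_fun, Fintype.card_fin,
          Fintype.card_subtype_compl, Fintype.card_coe, s.2]
      have hS : S.card = r ^ n - r ^ (n - r) := by
        have : S = univ \ (univ.filter fun g : C → Fin r => ∀ c : ↥s.1, g c.1 = t c) := by
          rw [← filter_not]
          apply filter_congr
          intro g _
          push_neg
          rfl
        rw [this, card_sdiff_of_subset (filter_subset _ _), hT, card_univ, Fintype.card_fun,
          Fintype.card_fin, hn]
      rw [h1, hS]
    have hcardI : Fintype.card I = n.choose r * r ^ r := by
      rw [Fintype.card_sigma]
      have : ∀ s : {s : Finset C // s.card = r}, Fintype.card (↥s.1 → Fin r) = r ^ r := by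
        intro s; rw [Fintype.card_fun, Fintype.card_fin, Fintype.card_coe, s.2]
      simp_rw [this]
      rw [sum_const, card_univ, Fintype.card_finset_len, smul_eq_mul, hn]
    have htot : bad.card ≤ (n.choose r * r ^ r) * (r ^ n - r ^ (n - r)) ^ m :=
      calc bad.card ≤ (univ.biUnion badE).card := card_le_card hsub
        _ ≤ ∑ p : I, (badE p).card := card_biUnion_le
        _ ≤ ∑ _p : I, (r ^ n - r ^ (n - r)) ^ m := sum_le_sum fun p _ => hcard p
        _ = Fintype.card I * (r ^ n - r ^ (n - r)) ^ m := by
            rw [sum_const, card_univ, smul_eq_mul]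
        _ = (n.choose r * r ^ r) * (r ^ n - r ^ (n - r)) ^ m := by rw [hcardI]
    -- strict inequality over ℝ
    have hr0 : (0 : ℝ) < (r : ℝ) := by exact_mod_cast Nat.lt_of_lt_of_le Nat.zero_lt_one hr
    have hle : r ^ (n - r) ≤ r ^ n :=
      Nat.pow_le_pow_right (Nat.lt_of_lt_of_le Nat.zero_lt_one hr) (Nat.sub_le _ _)
    have hfac : ((r ^ n - r ^ (n - r) : ℕ) : ℝ) = (r : ℝ) ^ n * (1 - 1 / (r : ℝ) ^ r) := by
      have hne : ((r : ℝ) ^ r) ≠ 0 := by positivity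
      push_cast [hle]
      rw [mul_sub, mul_one, mul_one_div]
      congr 1
      rw [eq_div_iff hne, ← pow_add, Nat.sub_add_cancel hC]
    have hlt : bad.card < Fintype.card (Z → C → Fin r) := by
      have hpos : (0 : ℝ) < ((r : ℝ) ^ n) ^ m := by positivity
      have h2 : ((bad.card : ℝ)) < ((r : ℝ) ^ n) ^ m := by
        calc ((bad.card : ℝ))
            ≤ (((n.choose r * r ^ r) * (r ^ n - r ^ (n - r)) ^ m : ℕ) : ℝ) := by
              exact_mod_cast htot
          _ = ((n.choose r : ℝ) * (r : ℝ) ^ r) *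
                ((r : ℝ) ^ n * (1 - 1 / (r : ℝ) ^ r)) ^ m := by
              push_cast [hfac]; ring
          _ = ((n.choose r : ℝ) * (r : ℝ) ^ r * (1 - 1 / (r : ℝ) ^ r) ^ m) *
                ((r : ℝ) ^ n) ^ m := by rw [mul_pow]; ring
          _ < 1 * ((r : ℝ) ^ n) ^ m := mul_lt_mul_of_pos_right hprob hpos
          _ = ((r : ℝ) ^ n) ^ m := one_mul _
      have hcardfun : Fintype.card (Z → C → Fin r) = (r ^ n) ^ m := by
        rw [Fintype.card_fun, Fintype.card_fun, Fintype.card_fin, hn, hm]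
      rw [hcardfun]
      exact_mod_cast h2
    have hex : ∃ F, F ∉ bad := by
      by_contra hcon
      push_neg at hcon
      have hle2 : (univ : Finset (Z → C → Fin r)).card ≤ bad.card :=
        card_le_card fun F _ => hcon F
      rw [card_univ] at hle2
      omega
    obtain ⟨F, hFb⟩ := hex
    have hFb' : ¬ (∃ cs : Fin r → C, Function.Injective cs ∧
        ∃ js : Fin r → Fin r, ∀ z, ∃ i, F z (cs i) ≠ js i) := by
      intro h
      exact hFb (mem_filter.2 ⟨mem_univ _, h⟩)
    push_neg at hFb'
    exact ⟨F, hFb'⟩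
  obtain ⟨F, hF⟩ := key
  refine ⟨fun c j => {z | F z c = j}, ?_, ?_, ?_⟩
  · intro c; ext z; simp
  · intro c j j' hjj'
    rw [Set.disjoint_left]
    intro z hz hz'
    exact hjj' (hz.symm.trans hz')
  · intro cs hcs js
    obtain ⟨z, hz⟩ := hF cs hcs js
    exact ⟨z, Set.mem_iInter.2 fun i => hz i⟩
end

section
/- Let (U, 𝒳, t) be an MCSP instance with t < |𝒳|. Equip the location set V = 𝒳 with the uniform metric d defined by d(X,Y) = 1 for X ≠ Y and d(X,X) = 0, and for each e ∈ U let S(e) = {X ∈ 𝒳 : e ∈ X}. Then for every subcollection 𝒳' ⊆ 𝒳 with |𝒳'| = t, setting F = 𝒳 \ 𝒳' (so that |F| = |𝒳| − t and F is nonempty), one has Cong(𝒳') = max_{e∈U} Σ_{X∈S(e)} d(X, F), where d(X,F) = min_{Y∈F} d(X,Y). Consequently the optimum value of the MCSP instance equals the optimum value of the Robust k-Median instance (V, {S(e)}_{e∈U}, d) with k = |𝒳| − t. -/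
lemma inf_unif {ι : Type} [DecidableEq ι] (F : Finset ι) (hF : F.Nonempty) (x : ι) :
    sInf ((fun y : ι => if x = y then (0 : ℝ) else 1) '' (F : Set ι)) =
      if x ∈ F then (0 : ℝ) else 1 := by
  by_cases hx : x ∈ F
  · simp only [hx, if_true]
    apply le_antisymm
    · exact csInf_le ⟨0, by rintro z ⟨y, hy, rfl⟩; dsimp only; split <;> norm_num⟩
        ⟨x, hx, by simp⟩
    · apply le_csInf ⟨_, Set.mem_image_of_mem _ hx⟩
      rintro z ⟨y, hy, rfl⟩; dsimp only; split <;> norm_num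
  · have : ((fun y : ι => if x = y then (0 : ℝ) else 1) '' (F : Set ι)) = {1} := by
      ext z
      constructor
      · rintro ⟨y, hy, rfl⟩
        have : x ≠ y := fun h => hx (by rw [h]; exact hy)
        simp [this]
      · rintro rfl
        obtain ⟨y, hy⟩ := hF
        have : x ≠ y := fun h => hx (by rw [h]; exact hy)
        exact ⟨y, hy, by simp [this]⟩
    simp [this, hx]

lemma sup_cast_eq_sSup {U : Type} [Fintype U] [Nonempty U] (f : U → ℕ) :
    ((Finset.univ.sup f : ℕ) : ℝ) = sSup (Set.range fun e => (f e : ℝ)) := by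
  obtain ⟨e0, _, he0⟩ := Finset.exists_mem_eq_sup Finset.univ Finset.univ_nonempty f
  apply le_antisymm
  · rw [he0]
    exact le_csSup (Set.Finite.bddAbove (Set.finite_range _)) ⟨e0, rfl⟩
  · apply csSup_le (Set.range_nonempty _)
    rintro z ⟨e, rfl⟩
    exact_mod_cast Nat.cast_le.mpr (Finset.le_sup (Finset.mem_univ e))

/-- **Equivalence of MCSP and Robust k-Median on uniform metrics.**
Given an MCSP instance `(U, 𝒳, t)` (sets indexed by `ι`, `S x ⊆ U`, covering `U`,
`0 < t < |ι|`), put the uniform metric `d x y = if x = y then 0 else 1` on `V = ι`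
and let `S(e) = {x : e ∈ S x}`.  Then for every subcollection `X'` with `|X'| = t`,
taking `F = X'ᶜ` (of size `|ι| − t`, nonempty), the congestion of `X'` equals the
worst-case connection cost `max_e Σ_{x ∈ S(e)} d(x, F)`; consequently the optimum
value of the MCSP instance equals the optimum of the Robust `k`-Median instance
with `k = |ι| − t`. -/
theorem stmt2 {U ι : Type} [Fintype U] [Nonempty U] [DecidableEq U]
    [Fintype ι] [DecidableEq ι]
    (S : ι → Finset U) (hcover : ∀ e : U, ∃ x : ι, e ∈ S x)
    (t : ℕ) (ht : 0 < t) (ht' : t < Fintype.card ι) :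
    (∀ X' : Finset ι, X'.card = t →
      ((Finset.univ.sup (fun e : U => (X'.filter fun x => e ∈ S x).card) : ℕ) : ℝ) =
        sSup (Set.range fun e : U =>
          ∑ x ∈ Finset.univ.filter (fun y : ι => e ∈ S y),
            sInf ((fun y : ι => if x = y then (0 : ℝ) else 1) ''
              ((X'ᶜ : Finset ι) : Set ι)))) ∧
    sInf {z : ℝ | ∃ X' : Finset ι, X'.card = t ∧
        z = ((Finset.univ.sup (fun e : U => (X'.filter fun x => e ∈ S x).card) : ℕ) : ℝ)} =
      sInf {z : ℝ | ∃ F : Finset ι, F.card = Fintype.card ι - t ∧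
        z = sSup (Set.range fun e : U =>
          ∑ x ∈ Finset.univ.filter (fun y : ι => e ∈ S y),
            sInf ((fun y : ι => if x = y then (0 : ℝ) else 1) '' (F : Set ι)))} := by
  have key : ∀ X' : Finset ι, X'.card = t →
      ((Finset.univ.sup (fun e : U => (X'.filter fun x => e ∈ S x).card) : ℕ) : ℝ) =
        sSup (Set.range fun e : U =>
          ∑ x ∈ Finset.univ.filter (fun y : ι => e ∈ S y),
            sInf ((fun y : ι => if x = y then (0 : ℝ) else 1) ''
              ((X'ᶜ : Finset ι) : Set ι))) := by
    intro X' hX'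
    have hFne : (X'ᶜ : Finset ι).Nonempty := by
      rw [← Finset.card_pos, Finset.card_compl, hX']
      omega
    have hsum : ∀ e : U,
        (∑ x ∈ Finset.univ.filter (fun y : ι => e ∈ S y),
          sInf ((fun y : ι => if x = y then (0 : ℝ) else 1) ''
            ((X'ᶜ : Finset ι) : Set ι))) =
        (((X'.filter fun x => e ∈ S x).card : ℕ) : ℝ) := by
      intro e
      have : ∀ x ∈ Finset.univ.filter (fun y : ι => e ∈ S y),
          sInf ((fun y : ι => if x = y then (0 : ℝ) else 1) ''
            ((X'ᶜ : Finset ι) : Set ι)) = if x ∈ X' then (1 : ℝ) else 0 := by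
        intro x _
        rw [inf_unif _ hFne]
        by_cases h : x ∈ X' <;> simp [h]
      rw [Finset.sum_congr rfl this, Finset.sum_boole, Finset.filter_filter]
      have heq : Finset.filter (fun y => e ∈ S y ∧ y ∈ X') Finset.univ
          = X'.filter (fun x => e ∈ S x) := by
        ext a; simp [and_comm]
      rw [heq]
    rw [sup_cast_eq_sSup]
    exact congrArg sSup (congrArg Set.range (funext fun e => (hsum e).symm))
  refine ⟨key, ?_⟩
  congr 1
  ext z
  constructor
  · rintro ⟨X', hX', rfl⟩
    exact ⟨X'ᶜ, by rw [Finset.card_compl, hX'], by rw [key X' hX']⟩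
  · rintro ⟨F, hF, rfl⟩
    refine ⟨Fᶜ, ?_, ?_⟩
    · rw [Finset.card_compl, hF]; omega
    · rw [key Fᶜ (by rw [Finset.card_compl, hF]; omega), compl_compl]
end

section
/- Under the Setup, suppose σ is a labeling that strongly satisfies every edge of G. Let 𝒳' = {(v, σ(v)) : v ∈ 𝒱}. Then every element e ∈ U belongs to X(v, σ(v)) for exactly one vertex v ∈ 𝒱; that is, Cong(e, 𝒳') = 1 for every e ∈ U. -/
/-- `v` is a vertex of the edge `h` (edges of an `r`-partite hypergraph are given as
tuples of their `r` vertices, one from each part). -/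
def MemEdge {r : ℕ} {V : Type} (h : Fin r → V) (v : V) : Prop := ∃ i : Fin r, h i = v

/-- The set `X(v,ℓ) = ⋃_{h ∈ E : v ∈ h} A^{j(v)}_{π_h^{j(v)}(ℓ)}(h)`. -/
def Xset {r : ℕ} {V L C U : Type} (part : V → Fin r) (E : Set (Fin r → V))
    (π : (Fin r → V) → Fin r → L → C) (A : (Fin r → V) → C → Fin r → Set U)
    (v : V) (ℓ : L) : Set U :=
  {e : U | ∃ h ∈ E, MemEdge h v ∧ e ∈ A h (π h (part v) ℓ) (part v)}

/-- The congestion `Cong(e, 𝒳') = |{(v,ℓ) ∈ 𝒳' : e ∈ X(v,ℓ)}|`. -/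
noncomputable def Cong {r : ℕ} {V L C U : Type} (part : V → Fin r) (E : Set (Fin r → V))
    (π : (Fin r → V) → Fin r → L → C) (A : (Fin r → V) → C → Fin r → Set U)
    (X' : Set (V × L)) (e : U) : ℕ :=
  {p ∈ X' | e ∈ Xset part E π A p.1 p.2}.ncard

/-- **Yes-instance lemma (uniform metric).**
In the Setup (an `r`-partite hypergraph `G` with parts given by `part`, edge set `E`,
label sets `Lset j`, projections `π`, pairwise disjoint covering ground sets `Uh h`,
and, for each edge `h` and color `c`, a partition `(A h c 1, …, A h c r)` of `Uh h`):
if `σ` is a labeling that strongly satisfies every edge, then, with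
`𝒳' = {(v, σ v) : v ∈ 𝒱}`, every element `e ∈ U` belongs to `X(v, σ v)` for exactly
one vertex `v`; that is, `Cong(e, 𝒳') = 1` for every `e ∈ U`. -/
theorem stmt5 {r : ℕ} (hr : 1 ≤ r) {V L C U : Type} [Finite V] [Finite C]
    (part : V → Fin r) (E : Set (Fin r → V)) (hEfin : E.Finite)
    (hE : ∀ h ∈ E, ∀ i : Fin r, part (h i) = i)
    (Lset : Fin r → Set L) (hLfin : ∀ j, (Lset j).Finite)
    (π : (Fin r → V) → Fin r → L → C)
    (Uh : (Fin r → V) → Set U) (hUfin : ∀ h ∈ E, (Uh h).Finite)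
    (hUdisj : ∀ h ∈ E, ∀ h' ∈ E, h ≠ h' → Disjoint (Uh h) (Uh h'))
    (hUcover : ∀ e : U, ∃ h ∈ E, e ∈ Uh h)
    (A : (Fin r → V) → C → Fin r → Set U)
    (hApart : ∀ h ∈ E, ∀ c : C, (⋃ j : Fin r, A h c j) = Uh h)
    (hAdisj : ∀ h ∈ E, ∀ c : C, ∀ j j' : Fin r, j ≠ j' → Disjoint (A h c j) (A h c j'))
    (σ : V → L) (hσ : ∀ v : V, σ v ∈ Lset (part v))
    (hstrong : ∀ h ∈ E, ∀ v v' : V, MemEdge h v → MemEdge h v' →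
      π h (part v) (σ v) = π h (part v') (σ v')) :
    ∀ e : U, (∃! v : V, e ∈ Xset part E π A v (σ v)) ∧
      Cong part E π A (Set.range fun v : V => (v, σ v)) e = 1 := by
  intro e
  obtain ⟨h, hhE, heh⟩ := hUcover e
  set i0 : Fin r := ⟨0, hr⟩ with hi0
  set c : C := π h (part (h i0)) (σ (h i0)) with hc
  have hcolor : ∀ i : Fin r, π h i (σ (h i)) = c := by
    intro i
    have := hstrong h hhE (h i) (h i0) ⟨i, rfl⟩ ⟨i0, rfl⟩
    rw [hE h hhE i] at this
    exact this
  have hcov : e ∈ ⋃ j : Fin r, A h c j := by rw [hApart h hhE c]; exact heh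
  obtain ⟨j, hej⟩ := Set.mem_iUnion.mp hcov
  have hex : e ∈ Xset part E π A (h j) (σ (h j)) := by
    refine ⟨h, hhE, ⟨j, rfl⟩, ?_⟩
    rw [hE h hhE j, hcolor j]
    exact hej
  have huniq : ∀ v' : V, e ∈ Xset part E π A v' (σ v') → v' = h j := by
    intro v' hv'
    obtain ⟨h', hh'E, ⟨i', rfl⟩, he'⟩ := hv'
    have sub : e ∈ Uh h' := by
      rw [← hApart h' hh'E (π h' (part (h' i')) (σ (h' i')))]
      exact Set.mem_iUnion.mpr ⟨_, he'⟩
    have hhh : h' = h := by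
      by_contra hne
      exact Set.disjoint_left.mp (hUdisj h' hh'E h hhE hne) sub heh
    rw [hhh] at he'
    rw [hhh]
    rw [hE h hhE i', hcolor i'] at he'
    have hij : i' = j := by
      by_contra hne
      exact Set.disjoint_left.mp (hAdisj h hhE c i' j hne) he' hej
    rw [hij]
  have hEU : ∃! v : V, e ∈ Xset part E π A v (σ v) := ⟨h j, hex, huniq⟩
  refine ⟨hEU, ?_⟩
  have hseteq : {p ∈ Set.range (fun v : V => (v, σ v)) | e ∈ Xset part E π A p.1 p.2}
      = {(h j, σ (h j))} := by
    ext p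
    constructor
    · rintro ⟨⟨v, rfl⟩, hp⟩
      simp only [Set.mem_singleton_iff]
      have := huniq v hp
      subst this
      rfl
    · rintro rfl
      exact ⟨⟨h j, rfl⟩, hex⟩
  rw [Cong, hseteq, Set.ncard_singleton]
end

section
/- Under the Setup, assume additionally |C| ≥ r and that each family {p_c(h)}_{c∈C} is an (r,C)-partition system on U_h. Let 𝒳' be a finite set of pairs (v,ℓ) with ℓ ∈ L_{j(v)}, and for each vertex v let L_v = {ℓ ∈ L_{j(v)} : (v,ℓ) ∈ 𝒳'}. If Cong(e, 𝒳') < r for every e ∈ U, then every vertex v that is contained in at least one edge of G satisfies |L_v| < r², and consequently every edge h ∈ ℰ satisfies |Λ_h| < r³, where Λ_h = {(v,ℓ) ∈ 𝒳' : v ∈ h}. -/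
/-- **Claim 1: small label sets.**
In the Setup, assume `|C| ≥ r` and that each `{(A h c 1, …, A h c r)}_{c ∈ C}` is an
`(r,C)`-partition system on `Uh h`. Let `𝒳'` be a finite set of pairs `(v,ℓ)` with
`ℓ ∈ Lset (part v)`, and `L_v = {ℓ : (v,ℓ) ∈ 𝒳'}`. If `Cong(e, 𝒳') < r` for every
`e ∈ U`, then every vertex `v` contained in at least one edge satisfies `|L_v| < r²`,
and consequently every edge `h ∈ E` satisfies `|Λ_h| < r³`, where
`Λ_h = {(v,ℓ) ∈ 𝒳' : v ∈ h}`. -/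
theorem stmt6 {r : ℕ} (hr : 1 ≤ r) {V L C U : Type} [Finite V] [Fintype C]
    (hC : r ≤ Fintype.card C)
    (part : V → Fin r) (E : Set (Fin r → V)) (hEfin : E.Finite)
    (hE : ∀ h ∈ E, ∀ i : Fin r, part (h i) = i)
    (Lset : Fin r → Set L) (hLfin : ∀ j, (Lset j).Finite)
    (π : (Fin r → V) → Fin r → L → C)
    (Uh : (Fin r → V) → Set U) (hUfin : ∀ h ∈ E, (Uh h).Finite)
    (hUdisj : ∀ h ∈ E, ∀ h' ∈ E, h ≠ h' → Disjoint (Uh h) (Uh h'))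
    (hUcover : ∀ e : U, ∃ h ∈ E, e ∈ Uh h)
    (A : (Fin r → V) → C → Fin r → Set U)
    (hApart : ∀ h ∈ E, ∀ c : C, (⋃ j : Fin r, A h c j) = Uh h)
    (hAdisj : ∀ h ∈ E, ∀ c : C, ∀ j j' : Fin r, j ≠ j' → Disjoint (A h c j) (A h c j'))
    (hAint : ∀ h ∈ E, ∀ cs : Fin r → C, Function.Injective cs → ∀ js : Fin r → Fin r,
      (⋂ i : Fin r, A h (cs i) (js i)).Nonempty)
    (X' : Set (V × L)) (hX'fin : X'.Finite)
    (hX'lab : ∀ p ∈ X', p.2 ∈ Lset (part p.1))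
    (hcong : ∀ e : U, Cong part E π A X' e < r) :
    (∀ v : V, (∃ h ∈ E, MemEdge h v) → {ℓ : L | (v, ℓ) ∈ X'}.ncard < r ^ 2) ∧
    (∀ h ∈ E, {p ∈ X' | MemEdge h p.1}.ncard < r ^ 3) := by
  classical
  -- Key: for any vertex in an edge, label set is small.
  have key : ∀ v : V, (∃ h ∈ E, MemEdge h v) → {ℓ : L | (v, ℓ) ∈ X'}.ncard < r ^ 2 := by
    rintro v ⟨h, hhE, i, hiv⟩
    by_contra hge
    push_neg at hge
    set Lv := {ℓ : L | (v, ℓ) ∈ X'} with hLv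
    have hLvfin : Lv.Finite := by
      apply (hX'fin.image Prod.snd).subset
      rintro ℓ hℓ
      exact ⟨(v, ℓ), hℓ, rfl⟩
    set S : Finset L := hLvfin.toFinset with hS
    have hScard : r ^ 2 ≤ S.card := by
      rwa [Set.ncard_eq_toFinset_card _ hLvfin] at hge
    have hmemS : ∀ ℓ, ℓ ∈ S ↔ (v, ℓ) ∈ X' := by
      intro ℓ; rw [hS, Set.Finite.mem_toFinset]; rfl
    set f : L → C := fun ℓ => π h (part v) ℓ with hf
    -- In either case we produce `e` and `r` distinct labels, contradicting congestion.
    have main : ∀ (e : U) (ℓs : Fin r → L), Function.Injective ℓs →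
        (∀ k, (v, ℓs k) ∈ X' ∧ e ∈ Xset part E π A v (ℓs k)) → False := by
      intro e ℓs hinj hmem
      have hlt := hcong e
      have hle : r ≤ Cong part E π A X' e := by
        have hg : Function.Injective (fun k : Fin r => (v, ℓs k)) := by
          intro a b hab
          exact hinj (congrArg Prod.snd hab)
        have hsub : Set.range (fun k : Fin r => (v, ℓs k)) ⊆
            {p ∈ X' | e ∈ Xset part E π A p.1 p.2} := by
          rintro p ⟨k, rfl⟩
          exact ⟨(hmem k).1, (hmem k).2⟩
        have hfin : {p ∈ X' | e ∈ Xset part E π A p.1 p.2}.Finite :=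
          hX'fin.subset (fun p hp => hp.1)
        calc r = (Set.range (fun k : Fin r => (v, ℓs k))).ncard := by
                  rw [← Set.image_univ, Set.ncard_image_of_injective _ hg, Set.ncard_univ,
                    Nat.card_eq_fintype_card, Fintype.card_fin]
          _ ≤ Cong part E π A X' e := Set.ncard_le_ncard hsub hfin
      omega
    by_cases himg : r ≤ (S.image f).card
    · -- at least r distinct colors appear
      obtain ⟨T, hTsub, hTcard⟩ := Finset.exists_subset_card_eq himg
      set cs : Fin r → C := fun k => (T.equivFin.symm (Fin.cast hTcard.symm k) : C) with hcs
      have hcsmem : ∀ k, cs k ∈ T := fun k => (T.equivFin.symm _).2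
      have hcsinj : Function.Injective cs := by
        intro a b hab
        have := T.equivFin.symm.injective (Subtype.ext hab)
        simpa [Fin.ext_iff] using this
      have hchoose : ∀ k : Fin r, ∃ ℓ ∈ S, f ℓ = cs k := by
        intro k
        have := hTsub (hcsmem k)
        simpa [Finset.mem_image, eq_comm] using Finset.mem_image.mp this
      choose ℓs hℓsS hℓsf using hchoose
      obtain ⟨e, he⟩ := hAint h hhE cs hcsinj (fun _ => part v)
      have hinj : Function.Injective ℓs := by
        intro a b hab
        apply hcsinj
        rw [← hℓsf a, ← hℓsf b, hab]
      refine main e ℓs hinj (fun k => ⟨(hmemS _).mp (hℓsS k), ?_⟩)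
      refine ⟨h, hhE, ⟨i, hiv⟩, ?_⟩
      have : e ∈ A h (cs k) (part v) := Set.mem_iInter.mp he k
      rwa [show π h (part v) (ℓs k) = cs k from hℓsf k]
    · -- some color has at least r labels
      push_neg at himg
      have hfiber : ∃ c ∈ S.image f, r ≤ {ℓ ∈ S | f ℓ = c}.card := by
        by_contra hall
        push_neg at hall
        have hb : S.card ≤ (r - 1) * (S.image f).card :=
          Finset.card_le_mul_card_image S (r - 1) (fun b hb => by
            have := hall b hb; omega)
        have : (r - 1) * (S.image f).card ≤ (r - 1) * (r - 1) :=
          Nat.mul_le_mul_left _ (by omega)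
        have hlt : (r - 1) * (r - 1) < r ^ 2 := by
          have : (r - 1) * (r - 1) < r * r := by
            apply Nat.mul_lt_mul_of_lt_of_le <;> omega
          simpa [pow_two] using this
        omega
      obtain ⟨c, _, hcge⟩ := hfiber
      obtain ⟨T, hTsub, hTcard⟩ := Finset.exists_subset_card_eq hcge
      set ℓs : Fin r → L := fun k => (T.equivFin.symm (Fin.cast hTcard.symm k) : L) with hℓs
      have hℓsmem : ∀ k, ℓs k ∈ T := fun k => (T.equivFin.symm _).2
      have hinj : Function.Injective ℓs := by
        intro a b hab
        have := T.equivFin.symm.injective (Subtype.ext hab)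
        simpa [Fin.ext_iff] using this
      have hℓsS : ∀ k, ℓs k ∈ S ∧ f (ℓs k) = c := by
        intro k
        have := hTsub (hℓsmem k)
        simpa using Finset.mem_filter.mp this
      -- get injective color sequence containing c
      obtain ⟨g⟩ : Nonempty (Fin r ↪ C) :=
        Function.Embedding.nonempty_of_card_le (by simpa using hC)
      obtain ⟨e, he⟩ : ∃ e : U, e ∈ A h c (part v) := by
        by_cases hcr : ∃ k : Fin r, g k = c
        · obtain ⟨k, hk⟩ := hcr
          obtain ⟨e, he⟩ := hAint h hhE g g.injective (fun _ => part v)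
          exact ⟨e, by have := Set.mem_iInter.mp he k; rwa [hk] at this⟩
        · push_neg at hcr
          set cs : Fin r → C := Function.update g ⟨0, by omega⟩ c with hcsdef
          have hnot : c ∉ Set.range (g : Fin r → C) := by
            rintro ⟨k, hk⟩; exact hcr k hk
          have hcsinj : Function.Injective cs := by
            intro a b hab
            rcases eq_or_ne a ⟨0, by omega⟩ with ha | ha <;>
              rcases eq_or_ne b ⟨0, by omega⟩ with hb | hb
            · rw [ha, hb]
            · exfalso
              rw [hcsdef, ha, Function.update_self, Function.update_of_ne hb] at hab
              exact hnot ⟨b, hab.symm⟩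
            · exfalso
              rw [hcsdef, Function.update_of_ne ha, hb, Function.update_self] at hab
              exact hnot ⟨a, hab⟩
            · rw [hcsdef, Function.update_of_ne ha, Function.update_of_ne hb] at hab
              exact g.injective hab
          obtain ⟨e, he⟩ := hAint h hhE cs hcsinj (fun _ => part v)
          refine ⟨e, ?_⟩
          have := Set.mem_iInter.mp he ⟨0, by omega⟩
          rwa [hcsdef, Function.update_self] at this
      refine main e ℓs hinj (fun k => ⟨(hmemS _).mp (hℓsS k).1, ?_⟩)
      refine ⟨h, hhE, ⟨i, hiv⟩, ?_⟩
      rw [show π h (part v) (ℓs k) = c from (hℓsS k).2]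
      exact he
  refine ⟨key, ?_⟩
  -- Part 2
  intro h hhE
  have hΛfin : {p ∈ X' | MemEdge h p.1}.Finite := hX'fin.subset (fun p hp => hp.1)
  set F : Finset (V × L) := hΛfin.toFinset with hF
  have hLvfin : ∀ i : Fin r, {ℓ : L | (h i, ℓ) ∈ X'}.Finite := by
    intro i
    apply (hX'fin.image Prod.snd).subset
    rintro ℓ hℓ
    exact ⟨(h i, ℓ), hℓ, rfl⟩
  set Ti : Fin r → Finset L := fun i => (hLvfin i).toFinset with hTi
  have hFsub : F ⊆ Finset.univ.biUnion (fun i : Fin r => (Ti i).image (Prod.mk (h i))) := by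
    intro p hp
    rw [hF, Set.Finite.mem_toFinset] at hp
    obtain ⟨hpX, i, hi⟩ := hp
    refine Finset.mem_biUnion.mpr ⟨i, Finset.mem_univ _, Finset.mem_image.mpr ⟨p.2, ?_, ?_⟩⟩
    · rw [hTi]; simp only [Set.Finite.mem_toFinset, Set.mem_setOf_eq]
      rwa [hi, Prod.mk.eta]
    · rw [hi]
  have hTicard : ∀ i : Fin r, (Ti i).card < r ^ 2 := by
    intro i
    have := key (h i) ⟨h, hhE, i, rfl⟩
    rwa [Set.ncard_eq_toFinset_card _ (hLvfin i)] at this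
  have hFcard : F.card ≤ r * (r ^ 2 - 1) := by
    calc F.card ≤ (Finset.univ.biUnion
          (fun i : Fin r => (Ti i).image (Prod.mk (h i)))).card := Finset.card_le_card hFsub
      _ ≤ ∑ i : Fin r, ((Ti i).image (Prod.mk (h i))).card := Finset.card_biUnion_le
      _ ≤ ∑ _i : Fin r, (r ^ 2 - 1) := by
          apply Finset.sum_le_sum
          intro i _
          calc ((Ti i).image (Prod.mk (h i))).card ≤ (Ti i).card := Finset.card_image_le
            _ ≤ r ^ 2 - 1 := by have := hTicard i; omega
      _ = r * (r ^ 2 - 1) := by simp [Finset.sum_const, mul_comm]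
  have : {p ∈ X' | MemEdge h p.1}.ncard = F.card := Set.ncard_eq_toFinset_card _ hΛfin
  have hr2 : 1 ≤ r ^ 2 := Nat.one_le_pow _ _ (by omega)
  have h3 : r ^ 3 = r * r ^ 2 := by ring
  have h4 : r * (r ^ 2 - 1) + r * 1 = r * r ^ 2 := by
    rw [← Nat.mul_add]; congr 1; omega
  omega
end

section
/- Let r ≥ 2 be an integer and G = (𝒱, ℰ) an r-partite hypergraph with nonempty finite label sets L_j for each part and projections π_h^j : L_j → C for each edge h and each j ∈ {1,…,r}, with ℰ nonempty. For each vertex v let L_v ⊆ L_{j(v)} be a set of labels with |L_v| ≤ r². Call an edge h colliding if there exist v, v' ∈ h with v ≠ v' and labels ℓ ∈ L_v, ℓ' ∈ L_{v'} with π_h^{j(v)}(ℓ) = π_h^{j(v')}(ℓ'). If at least β|ℰ| edges are colliding (for some real β ≥ 0), then there exists a labeling σ with σ(v) ∈ L_{j(v)} for all v and σ(v) ∈ L_v whenever L_v ≠ ∅, such that σ weakly satisfies at least (β/r⁴)|ℰ| edges. -/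
/-- **From colliding edges to a weakly-satisfying labeling.**
Let `r ≥ 2`, `G` an `r`-partite hypergraph with nonempty finite label sets `Lset j`
and projections `π`, with nonempty finite edge set `E`. For each vertex `v`, let
`Lv v ⊆ Lset (part v)` with `|Lv v| ≤ r²`. An edge `h` is colliding if some two
distinct vertices `v ≠ v'` of `h` have labels `ℓ ∈ Lv v`, `ℓ' ∈ Lv v'` projecting to
the same color on `h`. If at least `β·|E|` edges are colliding (`β ≥ 0`), then there
is a labeling `σ` (with `σ v ∈ Lset (part v)`, and `σ v ∈ Lv v` whenever
`Lv v ≠ ∅`) that weakly satisfies at least `(β/r⁴)·|E|` edges. -/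
theorem stmt7 {r : ℕ} (hr : 2 ≤ r) {V L C : Type}
    (part : V → Fin r)
    (E : Set (Fin r → V)) (hEfin : E.Finite) (hEne : E.Nonempty)
    (hE : ∀ h ∈ E, ∀ i : Fin r, part (h i) = i)
    (Lset : Fin r → Set L) (hLfin : ∀ j, (Lset j).Finite) (hLne : ∀ j, (Lset j).Nonempty)
    (π : (Fin r → V) → Fin r → L → C)
    (Lv : V → Set L) (hLv : ∀ v : V, Lv v ⊆ Lset (part v))
    (hLvcard : ∀ v : V, (Lv v).ncard ≤ r ^ 2)
    (β : ℝ) (hβ : 0 ≤ β)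
    (hcoll : β * (E.ncard : ℝ) ≤
      (({h ∈ E | ∃ v v' : V, MemEdge h v ∧ MemEdge h v' ∧ v ≠ v' ∧
        ∃ ℓ ∈ Lv v, ∃ ℓ' ∈ Lv v', π h (part v) ℓ = π h (part v') ℓ'}).ncard : ℝ)) :
    ∃ σ : V → L, (∀ v : V, σ v ∈ Lset (part v)) ∧
      (∀ v : V, (Lv v).Nonempty → σ v ∈ Lv v) ∧
      (β / (r : ℝ) ^ 4) * (E.ncard : ℝ) ≤
        (({h ∈ E | ∃ v v' : V, MemEdge h v ∧ MemEdge h v' ∧ v ≠ v' ∧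
          π h (part v) (σ v) = π h (part v') (σ v')}).ncard : ℝ) := by

  classical
  -- default labeling
  set σ₀ : V → L := fun v =>
    if hv : (Lv v).Nonempty then hv.choose else (hLne (part v)).choose with hσ₀
  have hσ₀mem : ∀ v, σ₀ v ∈ Lset (part v) := by
    intro v
    by_cases hv : (Lv v).Nonempty
    · simp only [hσ₀, dif_pos hv]; exact hLv v hv.choose_spec
    · simp only [hσ₀, dif_neg hv]; exact (hLne (part v)).choose_spec
  have hσ₀Lv : ∀ v, (Lv v).Nonempty → σ₀ v ∈ Lv v := by
    intro v hv; simp only [hσ₀, dif_pos hv]; exact hv.choose_spec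
  have hLvfin : ∀ v, (Lv v).Finite := fun v => (hLfin (part v)).subset (hLv v)
  -- edge finset and relevant vertex finset
  set EF : Finset (Fin r → V) := hEfin.toFinset with hEF
  set S : Finset V := EF.biUnion (fun h => Finset.image h Finset.univ) with hS
  have hmemS : ∀ {h : Fin r → V} {v : V}, h ∈ EF → MemEdge h v → v ∈ S := by
    intro h v hh ⟨i, hi⟩
    exact Finset.mem_biUnion.mpr ⟨h, hh, Finset.mem_image.mpr ⟨i, Finset.mem_univ _, hi⟩⟩
  -- label pools
  set A : V → Finset L := fun v =>
    if hv : (Lv v).Nonempty then (hLvfin v).toFinset else {σ₀ v} with hA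
  have hA_ne : ∀ v, (A v).Nonempty := by
    intro v
    by_cases hv : (Lv v).Nonempty
    · simp only [hA, dif_pos hv]
      exact ⟨hv.choose, (hLvfin v).mem_toFinset.mpr hv.choose_spec⟩
    · simp only [hA, dif_neg hv]; exact ⟨σ₀ v, Finset.mem_singleton_self _⟩
  have hA_sub : ∀ v, ∀ ℓ ∈ A v, ℓ ∈ Lset (part v) := by
    intro v ℓ hℓ
    by_cases hv : (Lv v).Nonempty
    · simp only [hA, dif_pos hv, Set.Finite.mem_toFinset] at hℓ; exact hLv v hℓ
    · simp only [hA, dif_neg hv, Finset.mem_singleton] at hℓ; exact hℓ ▸ hσ₀mem v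
  have hA_Lv : ∀ v, (Lv v).Nonempty → ∀ ℓ ∈ A v, ℓ ∈ Lv v := by
    intro v hv ℓ hℓ
    simp only [hA, dif_pos hv, Set.Finite.mem_toFinset] at hℓ; exact hℓ
  have hA_mem : ∀ v ℓ, ℓ ∈ Lv v → ℓ ∈ A v := by
    intro v ℓ hℓ
    have hv : (Lv v).Nonempty := ⟨ℓ, hℓ⟩
    simp only [hA, dif_pos hv, Set.Finite.mem_toFinset]; exact hℓ
  have hA_card : ∀ v, (A v).card ≤ r ^ 2 := by
    intro v
    by_cases hv : (Lv v).Nonempty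
    · simp only [hA, dif_pos hv]
      have h2 : (hLvfin v).toFinset.card = (Lv v).ncard := by
        rw [← Set.ncard_coe_finset, Set.Finite.coe_toFinset]
      rw [h2]; exact hLvcard v
    · simp only [hA, dif_neg hv, Finset.card_singleton]
      nlinarith
  -- the probability space
  set Ω : Finset (∀ v ∈ S, L) := S.pi A with hΩ
  have hΩcard : Ω.card = ∏ v ∈ S, (A v).card := Finset.card_pi _ _
  have hΩne : Ω.Nonempty :=
    ⟨fun v _ => (hA_ne v).choose, Finset.mem_pi.mpr fun v _ => (hA_ne v).choose_spec⟩
  -- extension of a partial labeling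
  set ext : (∀ v ∈ S, L) → V → L := fun a v =>
    if hv : v ∈ S then a v hv else σ₀ v with hext
  -- predicates
  set Psat : (V → L) → (Fin r → V) → Prop := fun σ h =>
    ∃ v v' : V, MemEdge h v ∧ MemEdge h v' ∧ v ≠ v' ∧
      π h (part v) (σ v) = π h (part v') (σ v') with hPsat
  set collF : Finset (Fin r → V) := EF.filter (fun h => ∃ v v' : V,
      MemEdge h v ∧ MemEdge h v' ∧ v ≠ v' ∧
      ∃ ℓ ∈ Lv v, ∃ ℓ' ∈ Lv v', π h (part v) ℓ = π h (part v') ℓ') with hcollF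
  -- key per-edge bound
  have key : ∀ h ∈ collF, Ω.card ≤ r ^ 4 * (Ω.filter (fun a => Psat (ext a) h)).card := by
    intro h hh
    obtain ⟨hhE, v, v', hmv, hmv', hvv, ℓ, hℓ, ℓ', hℓ', heq⟩ := Finset.mem_filter.mp hh
    have hvS : v ∈ S := hmemS hhE hmv
    have hv'S : v' ∈ S := hmemS hhE hmv'
    have hv'ev : v' ∈ S.erase v := Finset.mem_erase.mpr ⟨fun hc => hvv hc.symm, hv'S⟩
    set T : Finset V := (S.erase v).erase v' with hT
    -- injection from T.pi A into the satisfied filter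
    set ι : (∀ u ∈ T, L) → (∀ u ∈ S, L) := fun b u hu =>
      if h1 : u = v then ℓ else if h2 : u = v' then ℓ'
      else b u (Finset.mem_erase.mpr ⟨h2, Finset.mem_erase.mpr ⟨h1, hu⟩⟩) with hι
    have hextv : ∀ b, ext (ι b) v = ℓ := by
      intro b; simp only [hext, dif_pos hvS, hι]; simp
    have hextv' : ∀ b, ext (ι b) v' = ℓ' := by
      intro b
      simp only [hext, dif_pos hv'S, hι]
      rw [dif_neg (Ne.symm hvv)]; simp
    have hmaps : ∀ b ∈ T.pi A, ι b ∈ Ω.filter (fun a => Psat (ext a) h) := by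
      intro b hb
      refine Finset.mem_filter.mpr ⟨Finset.mem_pi.mpr ?_, ?_⟩
      · intro u hu
        simp only [hι]
        by_cases h1 : u = v
        · subst h1; rw [dif_pos rfl]; exact hA_mem u ℓ hℓ
        · rw [dif_neg h1]
          by_cases h2 : u = v'
          · subst h2; rw [dif_pos rfl]; exact hA_mem u ℓ' hℓ'
          · rw [dif_neg h2]
            exact Finset.mem_pi.mp hb u _
      · exact ⟨v, v', hmv, hmv', hvv, by rw [hextv, hextv']; exact heq⟩
    have hinj : Set.InjOn ι (T.pi A : Set _) := by
      intro b hb b' hb' heqb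
      funext u hu
      have hu' : u ∈ S := Finset.mem_of_mem_erase (Finset.mem_of_mem_erase hu)
      have h1 : u ≠ v := (Finset.mem_erase.mp (Finset.mem_of_mem_erase hu)).1
      have h2 : u ≠ v' := (Finset.mem_erase.mp hu).1
      have := congrFun (congrFun heqb u) hu'
      simpa only [hι, dif_neg h1, dif_neg h2] using this
    have hcardle : (T.pi A).card ≤ (Ω.filter (fun a => Psat (ext a) h)).card :=
      Finset.card_le_card_of_injOn ι hmaps hinj
    have hprod : Ω.card = (A v).card * ((A v').card * (T.pi A).card) := by
      rw [hΩcard, Finset.card_pi, ← Finset.mul_prod_erase S _ hvS,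
        ← Finset.mul_prod_erase (S.erase v) _ hv'ev]
    calc Ω.card = (A v).card * ((A v').card * (T.pi A).card) := hprod
      _ ≤ r ^ 2 * (r ^ 2 * (Ω.filter (fun a => Psat (ext a) h)).card) := by
          exact Nat.mul_le_mul (hA_card v)
            (Nat.mul_le_mul (hA_card v') hcardle)
      _ = r ^ 4 * (Ω.filter (fun a => Psat (ext a) h)).card := by ring
  -- double counting
  have hswap : ∑ h ∈ collF, (Ω.filter (fun a => Psat (ext a) h)).card
      = ∑ a ∈ Ω, (collF.filter (fun h => Psat (ext a) h)).card := by
    simp only [Finset.card_filter]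
    exact Finset.sum_comm
  have hsum : collF.card * Ω.card
      ≤ r ^ 4 * ∑ a ∈ Ω, (collF.filter (fun h => Psat (ext a) h)).card := by
    calc collF.card * Ω.card = ∑ _h ∈ collF, Ω.card := by
          rw [Finset.sum_const, smul_eq_mul]
      _ ≤ ∑ h ∈ collF, r ^ 4 * (Ω.filter (fun a => Psat (ext a) h)).card :=
          Finset.sum_le_sum key
      _ = r ^ 4 * ∑ h ∈ collF, (Ω.filter (fun a => Psat (ext a) h)).card :=
          (Finset.mul_sum _ _ _).symm
      _ = _ := by rw [hswap]
  -- pigeonhole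
  have hpig : ∃ a ∈ Ω, collF.card ≤ r ^ 4 * (EF.filter (fun h => Psat (ext a) h)).card := by
    by_contra hcon
    push_neg at hcon
    have hmono : ∀ a ∈ Ω, (collF.filter (fun h => Psat (ext a) h)).card
        ≤ (EF.filter (fun h => Psat (ext a) h)).card := by
      intro a _
      apply Finset.card_le_card
      rw [hcollF]
      exact Finset.monotone_filter_left _ (Finset.filter_subset _ _)
    have h1 : r ^ 4 * ∑ a ∈ Ω, (collF.filter (fun h => Psat (ext a) h)).card
        ≤ ∑ a ∈ Ω, r ^ 4 * (EF.filter (fun h => Psat (ext a) h)).card := by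
      rw [Finset.mul_sum]
      exact Finset.sum_le_sum fun a ha => Nat.mul_le_mul_left _ (hmono a ha)
    have h2 : ∑ a ∈ Ω, r ^ 4 * (EF.filter (fun h => Psat (ext a) h)).card
        < ∑ _a ∈ Ω, collF.card := Finset.sum_lt_sum_of_nonempty hΩne hcon
    rw [Finset.sum_const, smul_eq_mul] at h2
    have := lt_of_le_of_lt (le_trans hsum h1) h2
    rw [Nat.mul_comm] at this
    exact lt_irrefl _ this
  obtain ⟨a, haΩ, hkey⟩ := hpig
  have haA : ∀ v (hv : v ∈ S), a v hv ∈ A v := Finset.mem_pi.mp haΩ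
  refine ⟨ext a, ?_, ?_, ?_⟩
  · intro v
    by_cases hv : v ∈ S
    · simp only [hext, dif_pos hv]; exact hA_sub v _ (haA v hv)
    · simp only [hext, dif_neg hv]; exact hσ₀mem v
  · intro v hvne
    by_cases hv : v ∈ S
    · simp only [hext, dif_pos hv]; exact hA_Lv v hvne _ (haA v hv)
    · simp only [hext, dif_neg hv]; exact hσ₀Lv v hvne
  · -- translate ncards to finset cards
    have hc1 : ({h ∈ E | ∃ v v' : V, MemEdge h v ∧ MemEdge h v' ∧ v ≠ v' ∧
        ∃ ℓ ∈ Lv v, ∃ ℓ' ∈ Lv v', π h (part v) ℓ = π h (part v') ℓ'}).ncard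
        = collF.card := by
      rw [← Set.ncard_coe_finset]
      congr 1
      ext h
      simp [hcollF, hEF, Set.Finite.mem_toFinset]
    have hc2 : ({h ∈ E | ∃ v v' : V, MemEdge h v ∧ MemEdge h v' ∧ v ≠ v' ∧
        π h (part v) (ext a v) = π h (part v') (ext a v')}).ncard
        = (EF.filter (fun h => Psat (ext a) h)).card := by
      rw [← Set.ncard_coe_finset]
      congr 1
      ext h
      simp [hPsat, hEF, Set.Finite.mem_toFinset]
    rw [hc2]
    rw [hc1] at hcoll
    have hr0 : (0:ℝ) < (r:ℝ) ^ 4 := by positivity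
    rw [div_mul_eq_mul_div, div_le_iff₀ hr0]
    have hkeyR : (collF.card : ℝ) ≤ (r:ℝ) ^ 4 * ((EF.filter (fun h => Psat (ext a) h)).card : ℝ) := by
      exact_mod_cast hkey
    nlinarith [hcoll, hkeyR]
end

section
/- Under the Setup, assume |C| ≥ r and that each family {p_c(h)}_{c∈C} is an (r,C)-partition system on U_h. Let 𝒳' be a finite set of pairs (v,ℓ) with ℓ ∈ L_{j(v)}, and for each vertex v let L_v = {ℓ : (v,ℓ) ∈ 𝒳'}. Suppose an edge h ∈ ℰ is not colliding (i.e., for all v, v' ∈ h with v ≠ v' and all ℓ ∈ L_v, ℓ' ∈ L_{v'}, we have π_h^{j(v)}(ℓ) ≠ π_h^{j(v')}(ℓ')) and that λ(h) = |{(v,ℓ) ∈ 𝒳' : v ∈ h}| ≥ r. Then there exists an element e ∈ U_h with Cong(e, 𝒳') ≥ r. -/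
/-- **Non-colliding heavy edges force large congestion.**
In the Setup, assume `|C| ≥ r` and that each `{(A h c 1, …, A h c r)}_{c ∈ C}` is an
`(r,C)`-partition system on `Uh h`. Let `𝒳'` be a finite set of pairs `(v,ℓ)` with
`ℓ ∈ Lset (part v)`. Suppose an edge `h₀ ∈ E` is not colliding (for all distinct
vertices `v ≠ v'` of `h₀` and all `ℓ` with `(v,ℓ) ∈ 𝒳'`, `ℓ'` with `(v',ℓ') ∈ 𝒳'`,
the projected colors differ) and `λ(h₀) = |{(v,ℓ) ∈ 𝒳' : v ∈ h₀}| ≥ r`. Then some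
element `e ∈ Uh h₀` has `Cong(e, 𝒳') ≥ r`. -/
theorem stmt9 {r : ℕ} (hr : 1 ≤ r) {V L C U : Type} [Finite V] [Fintype C]
    (hC : r ≤ Fintype.card C)
    (part : V → Fin r) (E : Set (Fin r → V)) (hEfin : E.Finite)
    (hE : ∀ h ∈ E, ∀ i : Fin r, part (h i) = i)
    (Lset : Fin r → Set L) (hLfin : ∀ j, (Lset j).Finite)
    (π : (Fin r → V) → Fin r → L → C)
    (Uh : (Fin r → V) → Set U) (hUfin : ∀ h ∈ E, (Uh h).Finite)
    (hUdisj : ∀ h ∈ E, ∀ h' ∈ E, h ≠ h' → Disjoint (Uh h) (Uh h'))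
    (hUcover : ∀ e : U, ∃ h ∈ E, e ∈ Uh h)
    (A : (Fin r → V) → C → Fin r → Set U)
    (hApart : ∀ h ∈ E, ∀ c : C, (⋃ j : Fin r, A h c j) = Uh h)
    (hAdisj : ∀ h ∈ E, ∀ c : C, ∀ j j' : Fin r, j ≠ j' → Disjoint (A h c j) (A h c j'))
    (hAint : ∀ h ∈ E, ∀ cs : Fin r → C, Function.Injective cs → ∀ js : Fin r → Fin r,
      (⋂ i : Fin r, A h (cs i) (js i)).Nonempty)
    (X' : Set (V × L)) (hX'fin : X'.Finite)
    (hX'lab : ∀ p ∈ X', p.2 ∈ Lset (part p.1))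
    (h₀ : Fin r → V) (hh₀ : h₀ ∈ E)
    (hnoncoll : ∀ v v' : V, MemEdge h₀ v → MemEdge h₀ v' → v ≠ v' →
      ∀ ℓ : L, (v, ℓ) ∈ X' → ∀ ℓ' : L, (v', ℓ') ∈ X' →
        π h₀ (part v) ℓ ≠ π h₀ (part v') ℓ')
    (hlam : r ≤ {p ∈ X' | MemEdge h₀ p.1}.ncard) :
    ∃ e ∈ Uh h₀, r ≤ Cong part E π A X' e := by
  classical
  set color : V × L → C := fun p => π h₀ (part p.1) p.2 with hcolor
  set S : Set (V × L) := {p ∈ X' | MemEdge h₀ p.1} with hSdef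
  have hSfin : S.Finite := hX'fin.subset (fun p hp => hp.1)
  have hsame : ∀ p ∈ S, ∀ q ∈ S, color p = color q → p.1 = q.1 := by
    intro p hp q hq hcol
    by_contra hne
    exact hnoncoll p.1 q.1 hp.2 hq.2 hne p.2 (by simpa using hp.1) q.2
      (by simpa using hq.1) hcol
  set D' : Finset C := hSfin.toFinset.image color with hD'
  obtain ⟨B, hBor, hBcard⟩ : ∃ B : Finset C, (B ⊆ D' ∨ D' ⊆ B) ∧ B.card = r := by
    by_cases hD : r ≤ D'.card
    · obtain ⟨B, hB, hBc⟩ := Finset.exists_subset_card_eq hD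
      exact ⟨B, Or.inl hB, hBc⟩
    · obtain ⟨B, hB1, _, hBc⟩ := Finset.exists_subsuperset_card_eq
        (Finset.subset_univ D') (le_of_not_ge hD) (by simpa using hC)
      exact ⟨B, Or.inr hB1, hBc⟩
  set es : { x // x ∈ B } ≃ Fin r := B.equivFinOfCardEq hBcard with hes
  set cs : Fin r → C := fun i => ((es.symm i : { x // x ∈ B }) : C) with hcs
  have hcsinj : Function.Injective cs := fun i j hij =>
    es.symm.injective (Subtype.ext hij)
  set jfun : C → Fin r := fun c =>
    if hc : ∃ q, q ∈ S ∧ color q = c then part hc.choose.1 else ⟨0, hr⟩ with hjfun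
  obtain ⟨e, he⟩ := hAint h₀ hh₀ cs hcsinj (fun i => jfun (cs i))
  set T : Set (V × L) := {p ∈ S | color p ∈ B} with hT
  have hTfin : T.Finite := hSfin.subset (fun p hp => hp.1)
  have hTcard : r ≤ T.ncard := by
    rcases hBor with hB | hB
    · have hsub : (↑B : Set C) ⊆ color '' T := by
        intro c hc
        have hcD : c ∈ D' := hB hc
        rw [hD', Finset.mem_image] at hcD
        obtain ⟨p, hpS, hpc⟩ := hcD
        rw [Set.Finite.mem_toFinset] at hpS
        exact ⟨p, ⟨hpS, hpc ▸ hc⟩, hpc⟩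
      calc r = B.card := hBcard.symm
        _ = (↑B : Set C).ncard := (Set.ncard_coe_finset B).symm
        _ ≤ (color '' T).ncard := Set.ncard_le_ncard hsub (hTfin.image _)
        _ ≤ T.ncard := Set.ncard_image_le hTfin
    · have hST : S ⊆ T := by
        intro p hp
        refine ⟨hp, hB ?_⟩
        rw [hD', Finset.mem_image]
        exact ⟨p, hSfin.mem_toFinset.mpr hp, rfl⟩
      calc r ≤ S.ncard := hlam
        _ ≤ T.ncard := Set.ncard_le_ncard hST hTfin
  have hkey : ∀ p ∈ T, e ∈ A h₀ (color p) (part p.1) := by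
    intro p hp
    have hi : cs (es ⟨color p, hp.2⟩) = color p := by
      rw [hcs]; simp
    have hj : jfun (color p) = part p.1 := by
      have hex : ∃ q, q ∈ S ∧ color q = color p := ⟨p, hp.1, rfl⟩
      rw [hjfun]
      simp only [dif_pos hex]
      rw [hsame hex.choose hex.choose_spec.1 p hp.1 hex.choose_spec.2]
    have hmem := Set.mem_iInter.mp he (es ⟨color p, hp.2⟩)
    rw [hi, hj] at hmem
    exact hmem
  have heU : e ∈ Uh h₀ := by
    have h0 := Set.mem_iInter.mp he ⟨0, hr⟩
    rw [← hApart h₀ hh₀ (cs ⟨0, hr⟩)]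
    exact Set.mem_iUnion.mpr ⟨_, h0⟩
  refine ⟨e, heU, ?_⟩
  have hsub : T ⊆ {p ∈ X' | e ∈ Xset part E π A p.1 p.2} := by
    intro p hp
    exact ⟨hp.1.1, ⟨h₀, hh₀, hp.1.2, hkey p hp⟩⟩
  calc r ≤ T.ncard := hTcard
    _ ≤ _ := Set.ncard_le_ncard hsub (hX'fin.subset (fun p hp => hp.1))
end

section
/- Under the Setup, assume: r ≥ 2; |C| ≥ r; each family {p_c(h)}_{c∈C} is an (r,C)-partition system on U_h; ℰ is nonempty; every label set L_j is nonempty; every vertex of G has the same degree; and, for some real δ ≥ 0 with r⁷δ < 1, every labeling σ (with σ(v) ∈ L_{j(v)} for all v) weakly satisfies at most δ|ℰ| edges of G. Then for every finite set 𝒳' of pairs (v,ℓ) with ℓ ∈ L_{j(v)} and |𝒳'| = |𝒱|, there exists an element e ∈ U with Cong(e, 𝒳') ≥ r. -/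
/-!
Suppose every element of `U` has congestion `< r`. If `r` pairs of `𝒳'` lie on one edge `h` and
their colours `π_h` determine their parts, choose `r` distinct colours covering at least `r` of
the pairs (all of them if they use fewer than `r` colours); the intersection property of the
partition system on `U_h` then gives one element of `U_h` in `r` of the sets `X(v,ℓ)`. Hence every
vertex carries at most `r - 1` labels, and every edge carrying at least `r` pairs is conflicted:
two of its pairs on distinct vertices share a colour. By regularity and `|𝒳'| = |𝒱|` an edge
carries `r` pairs on average and at most `r(r-1)`, so at least `|ℰ| / (r(r-1))` edges are
conflicted. Each conflicted edge is weakly satisfied by one of `r(r-1)²` labelings built from the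
labels in `𝒳'`, so `|ℰ| ≤ r²(r-1)³ δ |ℰ| < |ℰ|`.
-/

open Finset Function

theorem Finset.ncard_sep_coe {α : Type} (s : Finset α) (p : α → Prop) [DecidablePred p] :
    {a ∈ (s : Set α) | p a}.ncard = #{a ∈ s | p a} := by
  rw [← Set.ncard_coe_finset, coe_filter]
  rfl

theorem Finset.exists_card_eq_le_card_filter_mem {α β : Type} [Fintype β] [DecidableEq β]
    (f : α → β) {s : Finset α} {n : ℕ} (hβ : n ≤ Fintype.card β) (hs : n ≤ #s) :
    ∃ t : Finset β, #t = n ∧ n ≤ #{a ∈ s | f a ∈ t} := by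
  rcases le_total n #(s.image f) with hn | hn
  · obtain ⟨t, hts, rfl⟩ := exists_subset_card_eq hn
    refine ⟨t, rfl, card_le_card_of_surjOn f fun b hb => ?_⟩
    obtain ⟨a, ha, rfl⟩ := mem_image.1 (hts hb)
    exact ⟨a, mem_filter.2 ⟨ha, mem_coe.1 hb⟩, rfl⟩
  · obtain ⟨t, hst, -, rfl⟩ := exists_subsuperset_card_eq (subset_univ _) hn hβ
    refine ⟨t, rfl, ?_⟩
    rwa [filter_true_of_mem fun a ha => hst (mem_image_of_mem f ha)]

theorem Finset.exists_fin_range_between {α : Type} {S : Finset α} {T : Set α} (hST : ↑S ⊆ T)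
    (hT : T.Nonempty) {n : ℕ} (hn : #S ≤ n) :
    ∃ f : Fin n → α, ↑S ⊆ Set.range f ∧ Set.range f ⊆ T := by
  let e := S.equivFin
  refine ⟨fun i => if hi : (i : ℕ) < #S then e.symm ⟨i, hi⟩ else hT.some,
    fun x hx => ⟨Fin.castLE hn (e ⟨x, hx⟩), by simp⟩, ?_⟩
  rintro _ ⟨i, rfl⟩
  dsimp only
  split_ifs
  exacts [hST (e.symm _).2, hT.some_mem]

theorem Finset.card_le_card_filter_mul_of_sum_eq {ι : Type} {s : Finset ι} {f : ι → ℕ}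
    {p : ι → Prop} [DecidablePred p] {n M : ℕ} (hsum : ∑ i ∈ s, f i = (n + 1) * #s)
    (hgood : ∀ i ∈ s, ¬ p i → f i ≤ n) (hbad : ∀ i ∈ s, f i ≤ M) :
    #s ≤ #{i ∈ s | p i} * M := by
  have : ∑ i ∈ s, f i ≤ #{i ∈ s | p i} * M + #s * n := by
    rw [← sum_filter_add_sum_filter_not s p]
    gcongr ?_ + ?_
    · simpa using sum_le_card_nsmul _ _ _ fun i hi => hbad i (mem_filter.1 hi).1
    · calc _ ≤ #{i ∈ s | ¬ p i} * n := by
            simpa using sum_le_card_nsmul _ _ _ fun i hi => hgood i (mem_filter.1 hi).1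
              (mem_filter.1 hi).2
        _ ≤ #s * n := by gcongr; exact filter_subset _ _
  nlinarith

variable {r : ℕ} {V L C U : Type}

instance MemEdge.instDecidable [DecidableEq V] (h : Fin r → V) (v : V) :
    Decidable (MemEdge h v) :=
  inferInstanceAs (Decidable (∃ i, h i = v))

theorem MemEdge.eq_of_part_eq {part : V → Fin r} {h : Fin r → V} (hpart : LeftInverse part h)
    {v w : V} (hv : MemEdge h v) (hw : MemEdge h w) (hvw : part v = part w) : v = w := by
  obtain ⟨i, rfl⟩ := hv
  obtain ⟨j, rfl⟩ := hw
  rw [hpart i, hpart j] at hvw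
  rw [hvw]

section DoubleCounting

variable [DecidableEq V] {E : Finset (Fin r → V)}

theorem card_filter_memEdge_eq_sum {h : Fin r → V} (hh : Injective h) (X' : Finset (V × L)) :
    #{p ∈ X' | MemEdge h p.1} = ∑ i, #{p ∈ X' | p.1 = h i} := by
  classical
  rw [← card_biUnion fun i _ j _ hij =>
    disjoint_filter.2 fun p _ (hi : p.1 = h i) hj => hh.ne hij (hi ▸ hj)]
  congr 1
  ext p
  simp [MemEdge, eq_comm]

theorem sum_sum_apply_eq_sum_card_mul [Fintype V] (hE : ∀ h ∈ E, Injective h) (k : V → ℕ) :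
    ∑ h ∈ E, ∑ i, k (h i) = ∑ v, #{h ∈ E | MemEdge h v} * k v := by
  calc ∑ h ∈ E, ∑ i, k (h i) = ∑ h ∈ E, ∑ v, if MemEdge h v then k v else 0 := by
        refine sum_congr rfl fun h hh => ?_
        rw [← sum_filter, ← sum_image fun i _ j _ hij => hE h hh hij]
        congr 1
        ext v
        simp [MemEdge, eq_comm]
    _ = ∑ v, #{h ∈ E | MemEdge h v} * k v := by
        rw [sum_comm]
        simp [← sum_filter]

theorem sum_sum_apply_eq_mul_card [Fintype V] (hE : ∀ h ∈ E, Injective h)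
    (hreg : ∀ v w, #{h ∈ E | MemEdge h v} = #{h ∈ E | MemEdge h w}) {k : V → ℕ}
    (hk : ∑ v, k v = Fintype.card V) : ∑ h ∈ E, ∑ i, k (h i) = r * #E := by
  have hedges := sum_sum_apply_eq_sum_card_mul hE fun _ => 1
  simp only [sum_const, card_univ, Fintype.card_fin, smul_eq_mul, mul_one] at hedges
  rw [sum_sum_apply_eq_sum_card_mul hE, mul_comm, hedges]
  rcases isEmpty_or_nonempty V with hV | ⟨⟨v₀⟩⟩
  · simp
  simp only [hreg _ v₀, ← mul_sum, hk, sum_const, card_univ, smul_eq_mul]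
  exact Nat.mul_comm _ _

theorem exists_memEdge_of_regular [NeZero r]
    (hreg : ∀ v w, #{h ∈ E | MemEdge h v} = #{h ∈ E | MemEdge h w}) (hE : E.Nonempty) (v : V) :
    ∃ h ∈ E, MemEdge h v := by
  obtain ⟨h₀, hh₀⟩ := hE
  have hpos : 0 < #{h ∈ E | MemEdge h (h₀ 0)} := card_pos.2 ⟨h₀, mem_filter.2 ⟨hh₀, 0, rfl⟩⟩
  obtain ⟨h, hh⟩ := card_pos.1 (hreg v (h₀ 0) ▸ hpos)
  exact ⟨h, mem_filter.1 hh⟩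

end DoubleCounting

/-- The intersection property of an `(r,C)`-partition system `c ↦ (A c 1, …, A c r)`. -/
def IsIntersecting (A : C → Fin r → Set U) : Prop :=
  ∀ cs : Fin r → C, Injective cs → ∀ js : Fin r → Fin r, (⋂ i, A (cs i) (js i)).Nonempty

theorem IsIntersecting.exists_forall_mem {A : C → Fin r → Set U} (hA : IsIntersecting A)
    {D : Finset C} (hD : #D = r) (φ : C → Fin r) : ∃ e, ∀ c ∈ D, e ∈ A c (φ c) := by
  let eqv := D.equivFinOfCardEq hD
  obtain ⟨e, he⟩ := hA (fun i => eqv.symm i) (Subtype.val_injective.comp eqv.symm.injective)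
    (fun i => φ (eqv.symm i))
  exact ⟨e, fun c hc => by simpa using Set.mem_iInter.1 he (eqv ⟨c, hc⟩)⟩

def Conflicted (part : V → Fin r) (π : (Fin r → V) → Fin r → L → C) (X' : Set (V × L))
    (h : Fin r → V) : Prop :=
  ∃ p ∈ X', ∃ q ∈ X', MemEdge h p.1 ∧ MemEdge h q.1 ∧ p.1 ≠ q.1 ∧
    π h (part p.1) p.2 = π h (part q.1) q.2

def WeaklySatisfies (part : V → Fin r) (π : (Fin r → V) → Fin r → L → C) (σ : V → L)
    (h : Fin r → V) : Prop :=
  ∃ v v' : V, MemEdge h v ∧ MemEdge h v' ∧ v ≠ v' ∧ π h (part v) (σ v) = π h (part v') (σ v')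

section Congestion

variable (part : V → Fin r) (π : (Fin r → V) → Fin r → L → C)
  (A : (Fin r → V) → C → Fin r → Set U)

theorem card_le_cong {E : Set (Fin r → V)} {X' P : Finset (V × L)} (hPX : P ⊆ X') {e : U}
    (he : ∀ p ∈ P, e ∈ Xset part E π A p.1 p.2) : #P ≤ Cong part E π A X' e := by
  rw [← Set.ncard_coe_finset]
  exact Set.ncard_le_ncard (fun p hp => ⟨hPX hp, he p hp⟩)
    (X'.finite_toSet.subset (Set.sep_subset _ _))

theorem exists_le_cong_of_colors_determine_parts [Fintype C] (hC : r ≤ Fintype.card C)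
    {E : Set (Fin r → V)} {h : Fin r → V} (hh : h ∈ E) (hA : IsIntersecting (A h))
    {X' P : Finset (V × L)} (hPX : P ⊆ X') (hPh : ∀ p ∈ P, MemEdge h p.1) (hPr : r ≤ #P)
    (φ : C → Fin r) (hφ : ∀ p ∈ P, φ (π h (part p.1) p.2) = part p.1) :
    ∃ e, r ≤ Cong part E π A X' e := by
  classical
  obtain ⟨D, hD, hPD⟩ := exists_card_eq_le_card_filter_mem (fun p => π h (part p.1) p.2) hC hPr
  obtain ⟨e, he⟩ := hA.exists_forall_mem hD φ
  refine ⟨e, hPD.trans (card_le_cong part π A ((filter_subset _ _).trans hPX) fun p hp => ?_)⟩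
  obtain ⟨hpP, hpD⟩ := mem_filter.1 hp
  have hpe := he _ hpD
  rw [hφ p hpP] at hpe
  exact ⟨h, hh, hPh p hpP, hpe⟩

theorem exists_le_cong_of_le_card_labels [Fintype C] [DecidableEq V] (hC : r ≤ Fintype.card C)
    {E : Set (Fin r → V)} {h : Fin r → V} (hh : h ∈ E) (hA : IsIntersecting (A h))
    {X' : Finset (V × L)} {v : V} (hv : MemEdge h v) (hvr : r ≤ #{p ∈ X' | p.1 = v}) :
    ∃ e, r ≤ Cong part E π A X' e :=
  exists_le_cong_of_colors_determine_parts part π A hC hh hA (filter_subset (·.1 = v) X')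
    (fun p hp => (mem_filter.1 hp).2 ▸ hv) hvr (fun _ => part v)
    fun p hp => by rw [(mem_filter.1 hp).2]

theorem exists_le_cong_of_not_conflicted [NeZero r] [Fintype C] [DecidableEq V]
    (hC : r ≤ Fintype.card C) {E : Set (Fin r → V)} {h : Fin r → V} (hh : h ∈ E)
    (hA : IsIntersecting (A h)) {X' : Finset (V × L)} (hconf : ¬ Conflicted part π X' h)
    (hr : r ≤ #{p ∈ X' | MemEdge h p.1}) : ∃ e, r ≤ Cong part E π A X' e := by
  set P := {p ∈ X' | MemEdge h p.1}
  have hfactor :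
      FactorsThrough (fun p : P => part p.1.1) (fun p : P => π h (part p.1.1) p.1.2) := by
    rintro ⟨p, hp⟩ ⟨q, hq⟩ hpq
    by_contra hne
    rw [mem_filter] at hp hq
    exact hconf ⟨p, hp.1, q, hq.1, hp.2, hq.2, fun h => hne (by simp [h]), hpq⟩
  exact exists_le_cong_of_colors_determine_parts part π A hC hh hA (filter_subset _ _)
    (fun p hp => (mem_filter.1 hp).2) hr _ fun p hp => hfactor.extend_apply default ⟨p, hp⟩

open scoped Classical in
theorem card_le_card_conflicted_mul [NeZero r] [Fintype V] [DecidableEq V] [Fintype C]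
    (hC : r ≤ Fintype.card C) {E : Finset (Fin r → V)} (hE : ∀ h ∈ E, LeftInverse part h)
    (hreg : ∀ v w, #{h ∈ E | MemEdge h v} = #{h ∈ E | MemEdge h w})
    (hA : ∀ h ∈ E, IsIntersecting (A h)) {X' : Finset (V × L)} (hX' : #X' = Fintype.card V)
    (hcong : ∀ e, Cong part E π A X' e < r) (hfew : ∀ v, #{p ∈ X' | p.1 = v} ≤ r - 1) :
    #E ≤ #{h ∈ E | Conflicted part π X' h} * (r * (r - 1)) := by
  have hgood : ∀ h ∈ E, ¬ Conflicted part π X' h → #{p ∈ X' | MemEdge h p.1} ≤ r - 1 :=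
    fun h hh hconf => by
      by_contra! hlt
      obtain ⟨e, he⟩ := exists_le_cong_of_not_conflicted part π A hC (mem_coe.2 hh) (hA h hh)
        hconf (by omega)
      exact (hcong e).not_ge he
  have hbad : ∀ h ∈ E, #{p ∈ X' | MemEdge h p.1} ≤ r * (r - 1) := fun h hh => by
    rw [card_filter_memEdge_eq_sum (hE h hh).injective]
    simpa using sum_le_card_nsmul univ _ _ fun i _ => hfew (h i)
  have hsum : ∑ h ∈ E, #{p ∈ X' | MemEdge h p.1} = (r - 1 + 1) * #E := by
    rw [Nat.sub_add_cancel NeZero.one_le, ← sum_sum_apply_eq_mul_card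
      (fun h hh => (hE h hh).injective) hreg (k := fun v => #{p ∈ X' | p.1 = v})]
    · exact sum_congr rfl fun h hh => card_filter_memEdge_eq_sum (hE h hh).injective X'
    · rw [← hX', card_eq_sum_card_fiberwise fun p _ => mem_coe.2 (mem_univ p.1)]
  exact card_le_card_filter_mul_of_sum_eq hsum hgood hbad

end Congestion

section Labelings

variable {part : V → Fin r} {π : (Fin r → V) → Fin r → L → C}

theorem exists_labelings_weaklySatisfies_of_conflicted [DecidableEq V] {E : Set (Fin r → V)}
    (hE : ∀ h ∈ E, LeftInverse part h) {Lset : Fin r → Set L} (hL : ∀ j, (Lset j).Nonempty)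
    {X' : Finset (V × L)} (hX' : ∀ p ∈ X', p.2 ∈ Lset (part p.1)) {n : ℕ}
    (hn : ∀ v, #{p ∈ X' | p.1 = v} ≤ n) :
    ∃ σ : Fin r × Fin n × Fin n → V → L, (∀ t v, σ t v ∈ Lset (part v)) ∧
      ∀ h ∈ E, Conflicted part π X' h → ∃ t, WeaklySatisfies part π (σ t) h := by
  classical
  choose lab hcover hlab using fun v =>
    exists_fin_range_between (S := {p ∈ X' | p.1 = v}.image Prod.snd) (T := Lset (part v))
      (fun l hl => by
        obtain ⟨p, hp, rfl⟩ := mem_image.1 hl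
        exact (mem_filter.1 hp).2 ▸ hX' p (mem_filter.1 hp).1)
      (hL _) (card_image_le.trans (hn v))
  -- `σ (j, a, b)` gives the vertices of part `j` their `a`-th label and all others their `b`-th;
  -- the two pairs witnessing a conflict lie in different parts.
  refine ⟨fun t v => if part v = t.1 then lab v t.2.1 else lab v t.2.2,
    fun t v => by dsimp only; split_ifs <;> exact hlab _ ⟨_, rfl⟩, ?_⟩
  rintro h hh ⟨p, hp, q, hq, hph, hqh, hpq, hcol⟩
  obtain ⟨a, ha⟩ := hcover p.1 (mem_image.2 ⟨p, mem_filter.2 ⟨hp, rfl⟩, rfl⟩)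
  obtain ⟨b, hb⟩ := hcover q.1 (mem_image.2 ⟨q, mem_filter.2 ⟨hq, rfl⟩, rfl⟩)
  have hparts : part q.1 ≠ part p.1 := fun hqp => hpq (hph.eq_of_part_eq (hE h hh) hqh hqp.symm)
  exact ⟨(part p.1, a, b), p.1, q.1, hph, hqh, hpq, by simpa [hparts, ha, hb] using hcol⟩

open scoped Classical in
theorem card_conflicted_le [DecidableEq V] {E : Finset (Fin r → V)}
    (hE : ∀ h ∈ E, LeftInverse part h) {Lset : Fin r → Set L} (hL : ∀ j, (Lset j).Nonempty)
    {X' : Finset (V × L)} (hX' : ∀ p ∈ X', p.2 ∈ Lset (part p.1)) {n : ℕ}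
    (hn : ∀ v, #{p ∈ X' | p.1 = v} ≤ n) {δ : ℝ}
    (hsound : ∀ σ : V → L, (∀ v, σ v ∈ Lset (part v)) →
      (#{h ∈ E | WeaklySatisfies part π σ h} : ℝ) ≤ δ * #E) :
    (#{h ∈ E | Conflicted part π X' h} : ℝ) ≤ r * n * n * (δ * #E) := by
  obtain ⟨σ, hσL, hσ⟩ := exists_labelings_weaklySatisfies_of_conflicted (π := π) hE hL hX' hn
  calc (#{h ∈ E | Conflicted part π X' h} : ℝ)
      ≤ #(univ.biUnion fun t => {h ∈ E | WeaklySatisfies part π (σ t) h}) := by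
        refine Nat.cast_le.2 (card_le_card fun h hh => ?_)
        obtain ⟨hh, hconf⟩ := mem_filter.1 hh
        obtain ⟨t, ht⟩ := hσ h hh hconf
        exact mem_biUnion.2 ⟨t, mem_univ _, mem_filter.2 ⟨hh, ht⟩⟩
    _ ≤ ∑ t, (#{h ∈ E | WeaklySatisfies part π (σ t) h} : ℝ) := by
        exact_mod_cast card_biUnion_le
    _ ≤ ∑ _t : Fin r × Fin n × Fin n, δ * #E := sum_le_sum fun t _ => hsound _ (hσL t)
    _ = r * n * n * (δ * #E) := by simp [mul_assoc]

end Labelings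

theorem le_pow_seven_mul_of_le_mul [NeZero r] {m b : ℕ} {δ : ℝ} (hδ : 0 ≤ δ)
    (hm : m ≤ b * (r * (r - 1))) (hb : (b : ℝ) ≤ r * (r - 1 : ℕ) * (r - 1 : ℕ) * (δ * m)) :
    (m : ℝ) ≤ r ^ 7 * δ * m := by
  have hcoef : r * (r - 1) * (r * (r - 1) * (r - 1)) ≤ r ^ 7 :=
    calc _ ≤ r * r * (r * r * r) := by gcongr <;> omega
      _ = r ^ 5 := by ring
      _ ≤ r ^ 7 := Nat.pow_le_pow_right (NeZero.pos r) (by norm_num)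
  calc (m : ℝ) ≤ b * (r * (r - 1) : ℕ) := by exact_mod_cast hm
    _ ≤ r * (r - 1 : ℕ) * (r - 1 : ℕ) * (δ * m) * (r * (r - 1) : ℕ) := by gcongr
    _ = (r * (r - 1) * (r * (r - 1) * (r - 1)) : ℕ) * δ * m := by push_cast; ring
    _ ≤ r ^ 7 * δ * m := by gcongr; exact_mod_cast hcoef

theorem stmt10_general {r : ℕ} (hr : 2 ≤ r) {V L C U : Type} [Fintype V] [Fintype C]
    (hC : r ≤ Fintype.card C)
    (part : V → Fin r) (E : Set (Fin r → V)) (hEfin : E.Finite) (hEne : E.Nonempty)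
    (hE : ∀ h ∈ E, ∀ i : Fin r, part (h i) = i)
    (Lset : Fin r → Set L) (hLne : ∀ j, (Lset j).Nonempty)
    (π : (Fin r → V) → Fin r → L → C)
    (A : (Fin r → V) → C → Fin r → Set U)
    (hAint : ∀ h ∈ E, ∀ cs : Fin r → C, Function.Injective cs → ∀ js : Fin r → Fin r,
      (⋂ i : Fin r, A h (cs i) (js i)).Nonempty)
    (hdeg : ∀ v w : V, ({h ∈ E | MemEdge h v}).ncard = ({h ∈ E | MemEdge h w}).ncard)
    (δ : ℝ) (hδ : 0 ≤ δ) (hδr : (r : ℝ) ^ 7 * δ < 1)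
    (hsound : ∀ σ : V → L, (∀ v : V, σ v ∈ Lset (part v)) →
      (({h ∈ E | ∃ v v' : V, MemEdge h v ∧ MemEdge h v' ∧ v ≠ v' ∧
        π h (part v) (σ v) = π h (part v') (σ v')}).ncard : ℝ) ≤ δ * (E.ncard : ℝ)) :
    ∀ X' : Set (V × L), X'.Finite → (∀ p ∈ X', p.2 ∈ Lset (part p.1)) →
      X'.ncard = Fintype.card V →
      ∃ e : U, r ≤ Cong part E π A X' e := by
  classical
  intro X' hX'fin hX'lab hX'card
  by_contra! hcong
  have : NeZero r := ⟨by omega⟩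
  lift E to Finset (Fin r → V) using hEfin
  lift X' to Finset (V × L) using hX'fin
  simp only [ncard_sep_coe, Set.ncard_coe_finset] at hdeg hsound hX'card
  have hfew : ∀ v, #{p ∈ X' | p.1 = v} ≤ r - 1 := fun v => by
    obtain ⟨h, hh, hv⟩ := exists_memEdge_of_regular hdeg (coe_nonempty.1 hEne) v
    by_contra! hlt
    obtain ⟨e, he⟩ :=
      exists_le_cong_of_le_card_labels part π A hC hh (hAint h hh) (X' := X') hv (by omega)
    exact (hcong e).not_ge he
  have hconf := card_le_card_conflicted_mul part π A hC hE hdeg hAint hX'card hcong hfew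
  have hsat := card_conflicted_le (π := π) hE hLne hX'lab hfew fun σ hσ => by
    convert hsound σ hσ
    exact Iff.rfl
  have hm : (0 : ℝ) < #E := by exact_mod_cast card_pos.2 (coe_nonempty.1 hEne)
  exact (mul_lt_of_lt_one_left hm hδr).not_ge (le_pow_seven_mul_of_le_mul hδ hconf hsat)

/-- **No-instance lemma (uniform metric).**
In the Setup, assume: `r ≥ 2`; `|C| ≥ r`; each `{(A h c 1, …, A h c r)}_{c ∈ C}` is an
`(r,C)`-partition system on `Uh h`; `E` is (finite and) nonempty; every label set
`Lset j` is nonempty; every vertex of `G` has the same degree; and, for some real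
`δ ≥ 0` with `r⁷·δ < 1`, every labeling `σ` (with `σ v ∈ Lset (part v)`) weakly
satisfies at most `δ·|E|` edges. Then for every finite set `𝒳'` of pairs `(v,ℓ)`
with `ℓ ∈ Lset (part v)` and `|𝒳'| = |𝒱|`, some element `e ∈ U` has
`Cong(e, 𝒳') ≥ r`. -/
theorem stmt10 {r : ℕ} (hr : 2 ≤ r) {V L C U : Type} [Fintype V] [Fintype C]
    (hC : r ≤ Fintype.card C)
    (part : V → Fin r) (E : Set (Fin r → V)) (hEfin : E.Finite) (hEne : E.Nonempty)
    (hE : ∀ h ∈ E, ∀ i : Fin r, part (h i) = i)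
    (Lset : Fin r → Set L) (hLfin : ∀ j, (Lset j).Finite) (hLne : ∀ j, (Lset j).Nonempty)
    (π : (Fin r → V) → Fin r → L → C)
    (Uh : (Fin r → V) → Set U) (hUfin : ∀ h ∈ E, (Uh h).Finite)
    (hUdisj : ∀ h ∈ E, ∀ h' ∈ E, h ≠ h' → Disjoint (Uh h) (Uh h'))
    (hUcover : ∀ e : U, ∃ h ∈ E, e ∈ Uh h)
    (A : (Fin r → V) → C → Fin r → Set U)
    (hApart : ∀ h ∈ E, ∀ c : C, (⋃ j : Fin r, A h c j) = Uh h)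
    (hAdisj : ∀ h ∈ E, ∀ c : C, ∀ j j' : Fin r, j ≠ j' → Disjoint (A h c j) (A h c j'))
    (hAint : ∀ h ∈ E, ∀ cs : Fin r → C, Function.Injective cs → ∀ js : Fin r → Fin r,
      (⋂ i : Fin r, A h (cs i) (js i)).Nonempty)
    (hdeg : ∀ v w : V, ({h ∈ E | MemEdge h v}).ncard = ({h ∈ E | MemEdge h w}).ncard)
    (δ : ℝ) (hδ : 0 ≤ δ) (hδr : (r : ℝ) ^ 7 * δ < 1)
    (hsound : ∀ σ : V → L, (∀ v : V, σ v ∈ Lset (part v)) →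
      (({h ∈ E | ∃ v v' : V, MemEdge h v ∧ MemEdge h v' ∧ v ≠ v' ∧
        π h (part v) (σ v) = π h (part v') (σ v')}).ncard : ℝ) ≤ δ * (E.ncard : ℝ)) :
    ∀ X' : Set (V × L), X'.Finite → (∀ p ∈ X', p.2 ∈ Lset (part p.1)) →
      X'.ncard = Fintype.card V →
      ∃ e : U, r ≤ Cong part E π A X' e :=
  stmt10_general hr hC part E hEfin hEne hE Lset hLne π A hAint hdeg δ hδ hδr hsound
end

section
/- Under the Setup, assume additionally that each label set is an initial segment L_j = {1, …, |L_j|} with |L_j| ≥ 2, and that the pairs (v,ℓ) are embedded on the real line by a map x with |x(v,ℓ) − x(v,ℓ')| = |ℓ − ℓ'| for all v ∈ 𝒱 and all ℓ, ℓ' ∈ L_{j(v)}, and |x(v,ℓ) − x(v',ℓ')| ≥ 2 whenever v ≠ v'. For e ∈ U let S(e) = {(v,ℓ) : v ∈ 𝒱, ℓ ∈ L_{j(v)}, e ∈ X(v,ℓ)}. If σ is a labeling that strongly satisfies every edge of G, then the facility set F = {(v,ℓ) : v ∈ 𝒱, ℓ ∈ L_{j(v)}, ℓ ≠ σ(v)}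 (which omits exactly one location per vertex) satisfies, for every e ∈ U, Σ_{(v,ℓ)∈S(e)} min_{p∈F} |x(v,ℓ) − x(p)| ≤ 1. -/
/-- **Yes-instance lemma (line metric).**
In the Setup, assume additionally that the label sets are initial segments
`L_j = {1, …, n j}` with `n j ≥ 2`, and that the pairs `(v,ℓ)` are embedded on the
real line by `x` with `|x(v,ℓ) − x(v,ℓ')| = |ℓ − ℓ'|` for labels of the same vertex
and `|x(v,ℓ) − x(v',ℓ')| ≥ 2` whenever `v ≠ v'`. For `e ∈ U` let
`S(e) = {(v,ℓ) : ℓ ∈ L_{j(v)}, e ∈ X(v,ℓ)}`. If `σ` is a labeling that strongly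
satisfies every edge, then the facility set
`F = {(v,ℓ) : ℓ ∈ L_{j(v)}, ℓ ≠ σ v}` (omitting exactly one location per vertex)
satisfies `Σ_{p ∈ S(e)} min_{q ∈ F} |x p − x q| ≤ 1` for every `e ∈ U`. -/
theorem stmt11 {r : ℕ} (hr : 1 ≤ r) {V C U : Type} [Fintype V] [Finite C]
    (part : V → Fin r) (E : Set (Fin r → V)) (hEfin : E.Finite)
    (hE : ∀ h ∈ E, ∀ i : Fin r, part (h i) = i)
    (n : Fin r → ℕ) (hn : ∀ j, 2 ≤ n j)
    (π : (Fin r → V) → Fin r → ℕ → C)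
    (Uh : (Fin r → V) → Set U) (hUfin : ∀ h ∈ E, (Uh h).Finite)
    (hUdisj : ∀ h ∈ E, ∀ h' ∈ E, h ≠ h' → Disjoint (Uh h) (Uh h'))
    (hUcover : ∀ e : U, ∃ h ∈ E, e ∈ Uh h)
    (A : (Fin r → V) → C → Fin r → Set U)
    (hApart : ∀ h ∈ E, ∀ c : C, (⋃ j : Fin r, A h c j) = Uh h)
    (hAdisj : ∀ h ∈ E, ∀ c : C, ∀ j j' : Fin r, j ≠ j' → Disjoint (A h c j) (A h c j'))
    (x : V × ℕ → ℝ)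
    (hx1 : ∀ v : V, ∀ ℓ ∈ Set.Icc 1 (n (part v)), ∀ ℓ' ∈ Set.Icc 1 (n (part v)),
      |x (v, ℓ) - x (v, ℓ')| = |(ℓ : ℝ) - (ℓ' : ℝ)|)
    (hx2 : ∀ v v' : V, v ≠ v' → ∀ ℓ ∈ Set.Icc 1 (n (part v)),
      ∀ ℓ' ∈ Set.Icc 1 (n (part v')), (2 : ℝ) ≤ |x (v, ℓ) - x (v', ℓ')|)
    (σ : V → ℕ) (hσ : ∀ v : V, σ v ∈ Set.Icc 1 (n (part v)))
    (hstrong : ∀ h ∈ E, ∀ v v' : V, MemEdge h v → MemEdge h v' →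
      π h (part v) (σ v) = π h (part v') (σ v')) :
    ∀ e : U,
      (∑ᶠ p ∈ {q : V × ℕ | q.2 ∈ Set.Icc 1 (n (part q.1)) ∧ e ∈ Xset part E π A q.1 q.2},
        sInf ((fun q : V × ℕ => |x p - x q|) ''
          {q : V × ℕ | q.2 ∈ Set.Icc 1 (n (part q.1)) ∧ q.2 ≠ σ q.1})) ≤ 1 := by
  intro e
  set F : Set (V × ℕ) := {q : V × ℕ | q.2 ∈ Set.Icc 1 (n (part q.1)) ∧ q.2 ≠ σ q.1} with hF
  set S : Set (V × ℕ) := {q : V × ℕ | q.2 ∈ Set.Icc 1 (n (part q.1)) ∧ e ∈ Xset part E π A q.1 q.2} with hS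
  set f : V × ℕ → ℝ := fun p => sInf ((fun q : V × ℕ => |x p - x q|) '' F) with hf
  have hbdd : ∀ p : V × ℕ, BddBelow ((fun q : V × ℕ => |x p - x q|) '' F) := by
    intro p
    refine ⟨0, ?_⟩
    rintro y ⟨q, _, rfl⟩
    positivity
  -- f vanishes at any point of F
  have hzero : ∀ p : V × ℕ, p ∈ F → f p = 0 := by
    intro p hp
    have h0 : (0 : ℝ) ∈ (fun q : V × ℕ => |x p - x q|) '' F := ⟨p, hp, by simp⟩
    have hle := csInf_le (hbdd p) h0
    have hge : (0 : ℝ) ≤ sInf ((fun q : V × ℕ => |x p - x q|) '' F) := by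
      apply le_csInf ⟨0, h0⟩
      rintro y ⟨q, _, rfl⟩
      positivity
    exact le_antisymm hle hge
  -- f at opened facility (v, σ v) is at most 1
  have hone : ∀ v : V, f (v, σ v) ≤ 1 := by
    intro v
    obtain ⟨h1, h2⟩ := hσ v
    obtain ⟨ℓ', hℓ1, hℓ2, hℓ3, hℓ4⟩ :
        ∃ ℓ', 1 ≤ ℓ' ∧ ℓ' ≤ n (part v) ∧ ℓ' ≠ σ v ∧ |(σ v : ℝ) - (ℓ' : ℝ)| = 1 := by
      by_cases hc : σ v = 1
      · exact ⟨2, one_le_two, hn _, by omega, by rw [hc]; norm_num⟩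
      · refine ⟨σ v - 1, by omega, by omega, by omega, ?_⟩
        rw [Nat.cast_sub (by omega : 1 ≤ σ v), Nat.cast_one, sub_sub_cancel]
        exact abs_one
    have hmem : (v, ℓ') ∈ F := ⟨⟨hℓ1, hℓ2⟩, hℓ3⟩
    have hdist : |x (v, σ v) - x (v, ℓ')| = 1 := by
      rw [hx1 v (σ v) ⟨h1, h2⟩ ℓ' ⟨hℓ1, hℓ2⟩]; exact hℓ4
    have h1mem : (1 : ℝ) ∈ (fun q : V × ℕ => |x (v, σ v) - x q|) '' F :=
      ⟨(v, ℓ'), hmem, hdist⟩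
    exact csInf_le (hbdd _) h1mem
  -- e lies in a unique edge
  have hedge : ∀ h₁ ∈ E, ∀ h₂ ∈ E, ∀ (c₁ c₂ : C) (j₁ j₂ : Fin r),
      e ∈ A h₁ c₁ j₁ → e ∈ A h₂ c₂ j₂ → h₁ = h₂ := by
    intro h₁ hh₁ h₂ hh₂ c₁ c₂ j₁ j₂ he₁ he₂
    by_contra hne
    have hu₁ : e ∈ Uh h₁ := by
      rw [← hApart h₁ hh₁ c₁]; exact Set.mem_iUnion.mpr ⟨j₁, he₁⟩
    have hu₂ : e ∈ Uh h₂ := by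
      rw [← hApart h₂ hh₂ c₂]; exact Set.mem_iUnion.mpr ⟨j₂, he₂⟩
    exact (hUdisj h₁ hh₁ h₂ hh₂ hne).ne_of_mem hu₁ hu₂ rfl
  -- uniqueness of the demand point labelled by σ
  have huniq : ∀ p ∈ S, ∀ q ∈ S, p.2 = σ p.1 → q.2 = σ q.1 → p = q := by
    rintro ⟨v, ℓ⟩ ⟨_, h₁, hh₁, hm₁, he₁⟩ ⟨v', ℓ''⟩ ⟨_, h₂, hh₂, hm₂, he₂⟩ hp hq
    simp only at hp hq he₁ he₂
    subst hp; subst hq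
    have hhe : h₁ = h₂ := hedge h₁ hh₁ h₂ hh₂ _ _ _ _ he₁ he₂
    subst hhe
    have hc : π h₁ (part v) (σ v) = π h₁ (part v') (σ v') :=
      hstrong h₁ hh₁ v v' hm₁ hm₂
    rw [hc] at he₁
    have hj : part v = part v' := by
      by_contra hne
      exact (hAdisj h₁ hh₁ _ _ _ hne).ne_of_mem he₁ he₂ rfl
    obtain ⟨i, hi⟩ := hm₁
    obtain ⟨i', hi'⟩ := hm₂
    have hi : h₁ i = v := hi
    have hi' : h₁ i' = v' := hi'
    have e1 : part v = i := by rw [← hi]; exact hE h₁ hh₁ i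
    have e2 : part v' = i' := by rw [← hi']; exact hE h₁ hh₂ i'
    have : v = v' := by rw [← hi, ← hi', ← e1, ← e2, hj]
    subst this
    rfl
  by_cases hex : ∃ p ∈ S, p.2 = σ p.1
  · obtain ⟨p₀, hp₀S, hp₀⟩ := hex
    have hsupp : S ∩ Function.support f = {p₀} ∩ Function.support f := by
      ext p
      simp only [Set.mem_inter_iff, Function.mem_support, Set.mem_singleton_iff]
      constructor
      · rintro ⟨hpS, hpne⟩
        refine ⟨?_, hpne⟩
        by_cases hps : p.2 = σ p.1
        · exact huniq p hpS p₀ hp₀S hps hp₀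
        · exact absurd (hzero p ⟨hpS.1, hps⟩) hpne
      · rintro ⟨rfl, hpne⟩
        exact ⟨hp₀S, hpne⟩
    calc (∑ᶠ p ∈ S, f p) = ∑ᶠ p ∈ ({p₀} : Set (V × ℕ)), f p :=
          finsum_mem_inter_support_eq f _ _ hsupp
      _ = f p₀ := finsum_mem_singleton
      _ ≤ 1 := by
          obtain ⟨v, ℓ⟩ := p₀
          simp only at hp₀
          subst hp₀
          exact hone v
  · have hsupp : S ∩ Function.support f = (∅ : Set (V × ℕ)) ∩ Function.support f := by
      ext p
      simp only [Set.mem_inter_iff, Function.mem_support, Set.mem_empty_iff_false,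
        false_and, iff_false, not_and, not_not]
      intro hpS
      by_cases hps : p.2 = σ p.1
      · exact absurd ⟨p, hpS, hps⟩ hex
      · exact hzero p ⟨hpS.1, hps⟩
    rw [finsum_mem_inter_support_eq f _ _ hsupp, finsum_mem_empty]
    norm_num
end

section
/- Under the Setup, assume: r ≥ 2; |C| ≥ r; each family {p_c(h)}_{c∈C} is an (r,C)-partition system on U_h; ℰ is nonempty; every label set is an initial segment L_j = {1, …, |L_j|} with |L_j| ≥ 2; every vertex of G has the same degree; for some real δ ≥ 0 with r⁷δ < 1, every labeling weakly satisfies at most δ|ℰ| edges of G; and the pairs (v,ℓ) are embedded on the real line by a map x with |x(v,ℓ) − x(v,ℓ')| = |ℓ − ℓ'| for all v and all ℓ, ℓ' ∈ L_{j(v)}, and |x(v,ℓ) − x(v',ℓ')| ≥ 2 whenever v ≠ v' (so distinct pairs are at distance at least 1). For e ∈ U let S(e) = {(v,ℓ) : e ∈ X(v,ℓ)}. Then for every set F of pairs (v,ℓ) with |F| = (Σ_{v∈𝒱} |L_{j(v)}|) − |𝒱|, there exists e ∈ U with Σ_{(v,ℓ)∈S(e)} min_{p∈F} |x(v,ℓ)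 − x(p)| ≥ r. -/
open Finset

section Locations

variable {r : ℕ} {V : Type}

def locations (part : V → Fin r) (n : Fin r → ℕ) : Set (V × ℕ) :=
  {q | q.2 ∈ Set.Icc 1 (n (part q.1))}

open Classical in
noncomputable def missingLabels (part : V → Fin r) (n : Fin r → ℕ) (F : Set (V × ℕ)) (v : V) :
    Finset ℕ :=
  {ℓ ∈ Icc 1 (n (part v)) | (v, ℓ) ∉ F}

variable {part : V → Fin r} {n : Fin r → ℕ}

lemma mem_missingLabels {F : Set (V × ℕ)} {v : V} {ℓ : ℕ} :
    ℓ ∈ missingLabels part n F v ↔ (v, ℓ) ∈ locations part n ∧ (v, ℓ) ∉ F := by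
  simp [missingLabels, locations]

lemma locations_finite [Finite V] : (locations part n).Finite := by
  refine (Set.finite_univ.prod (Set.finite_Icc 1 (⨆ j, n j))).subset ?_
  rintro ⟨v, ℓ⟩ ⟨h1, h2⟩
  exact ⟨trivial, h1, h2.trans (le_ciSup (Set.finite_range n).bddAbove (part v))⟩

lemma ncard_add_sum_card_missingLabels [Fintype V] {F : Set (V × ℕ)}
    (hF : F ⊆ locations part n) :
    F.ncard + ∑ v, #(missingLabels part n F v) = ∑ v, n (part v) := by
  classical
  let hit : V → Finset ℕ := fun v => {ℓ ∈ Icc 1 (n (part v)) | (v, ℓ) ∈ F}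
  have hcard : F.ncard = ∑ v, #(hit v) := by
    have hFeq : F = ↑((univ.sigma hit).map (Equiv.sigmaEquivProd V ℕ).toEmbedding) := by
      ext ⟨v, ℓ⟩
      simpa [hit, locations, and_comm] using @hF (v, ℓ)
    rw [hFeq, Set.ncard_coe_finset, card_map, card_sigma]
  have hsplit : ∀ v, #(hit v) + #(missingLabels part n F v) = n (part v) := fun v => by
    rw [missingLabels, card_filter_add_card_filter_not, Nat.card_Icc, Nat.add_sub_cancel]
  rw [hcard, ← sum_add_distrib]
  exact sum_congr rfl fun v _ => hsplit v

lemma sum_card_missingLabels_eq_card [Fintype V] {F : Set (V × ℕ)} (hF : F ⊆ locations part n)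
    (hn : ∀ j, 1 ≤ n j) (hFcard : F.ncard = ∑ v, n (part v) - Fintype.card V) :
    ∑ v, #(missingLabels part n F v) = Fintype.card V := by
  have hsum := ncard_add_sum_card_missingLabels hF
  have : Fintype.card V ≤ ∑ v, n (part v) := by
    simpa using card_nsmul_le_sum univ _ 1 fun v _ => hn (part v)
  omega

lemma nonempty_of_ncard_eq_sum_sub [Fintype V] [Nonempty V] {F : Set (V × ℕ)}
    (hn : ∀ j, 2 ≤ n j) (hFcard : F.ncard = ∑ v, n (part v) - Fintype.card V) : F.Nonempty := by
  have : 2 * Fintype.card V ≤ ∑ v, n (part v) := by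
    simpa [mul_comm] using card_nsmul_le_sum univ _ 2 fun v _ => hn (part v)
  have := Fintype.card_pos (α := V)
  exact Set.nonempty_of_ncard_ne_zero (by omega)

end Locations

lemma one_le_abs_natCast_sub {a b : ℕ} (h : a ≠ b) : (1 : ℝ) ≤ |(a : ℝ) - b| := by
  have : (1 : ℤ) ≤ |(a : ℤ) - b| := Int.one_le_abs (sub_ne_zero.2 (by exact_mod_cast h))
  exact_mod_cast this

lemma natCast_card_le_finsum_mem {α : Type*} {S : Set α} (hS : S.Finite) {Q : Finset α}
    (hQS : ↑Q ⊆ S) {f : α → ℝ} (hf0 : ∀ p ∈ S, 0 ≤ f p) (hf1 : ∀ q ∈ Q, 1 ≤ f q) :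
    (#Q : ℝ) ≤ ∑ᶠ p ∈ S, f p := by
  rw [finsum_mem_eq_finite_toFinset_sum f hS]
  calc (#Q : ℝ) ≤ ∑ q ∈ Q, f q := by simpa using card_nsmul_le_sum Q f 1 hf1
    _ ≤ ∑ p ∈ hS.toFinset, f p :=
      sum_le_sum_of_subset_of_nonneg (fun q hq => hS.mem_toFinset.2 (hQS hq))
        fun p hp _ => hf0 p (hS.mem_toFinset.1 hp)

section Line

variable {r : ℕ} {V : Type}

structure IsLineEmbedding (part : V → Fin r) (n : Fin r → ℕ) (x : V × ℕ → ℝ) : Prop where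
  abs_sub_eq : ∀ v : V, ∀ ℓ ∈ Set.Icc 1 (n (part v)), ∀ ℓ' ∈ Set.Icc 1 (n (part v)),
    |x (v, ℓ) - x (v, ℓ')| = |(ℓ : ℝ) - (ℓ' : ℝ)|
  two_le_abs_sub : ∀ v v' : V, v ≠ v' → ∀ ℓ ∈ Set.Icc 1 (n (part v)),
    ∀ ℓ' ∈ Set.Icc 1 (n (part v')), (2 : ℝ) ≤ |x (v, ℓ) - x (v', ℓ')|

/-- `Σ_{p ∈ S(e)} min_{q ∈ F} |x p - x q|`. -/
noncomputable def starCost {C U : Type} (part : V → Fin r) (n : Fin r → ℕ)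
    (E : Set (Fin r → V)) (π : (Fin r → V) → Fin r → ℕ → C)
    (A : (Fin r → V) → C → Fin r → Set U) (x : V × ℕ → ℝ) (F : Set (V × ℕ)) (e : U) : ℝ :=
  ∑ᶠ p ∈ {q : V × ℕ | q.2 ∈ Set.Icc 1 (n (part q.1)) ∧ e ∈ Xset part E π A q.1 q.2},
    sInf ((fun q : V × ℕ => |x p - x q|) '' F)

variable {part : V → Fin r} {n : Fin r → ℕ} {x : V × ℕ → ℝ}

lemma IsLineEmbedding.one_le_sInf_abs_sub (hx : IsLineEmbedding part n x)
    {F : Set (V × ℕ)} (hF : F ⊆ locations part n) (hFne : F.Nonempty)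
    {p : V × ℕ} (hp : p ∈ locations part n) (hpF : p ∉ F) :
    1 ≤ sInf ((fun q => |x p - x q|) '' F) := by
  obtain ⟨v, ℓ⟩ := p
  refine le_csInf (hFne.image _) ?_
  rintro _ ⟨⟨w, ℓ'⟩, hq, rfl⟩
  dsimp only
  by_cases hvw : v = w
  · subst hvw
    rw [hx.abs_sub_eq v ℓ hp ℓ' (hF hq)]
    exact one_le_abs_natCast_sub fun h => hpF (h ▸ hq)
  · linarith [hx.two_le_abs_sub v w hvw ℓ hp ℓ' (hF hq)]

end Line

lemma exists_forall_mem_of_consistent {r : ℕ} {C U ι : Type} [Fintype C]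
    (hC : r ≤ Fintype.card C) {B : C → Fin r → Set U}
    (hB : ∀ cs : Fin r → C, Function.Injective cs → ∀ js : Fin r → Fin r,
      (⋂ i : Fin r, B (cs i) (js i)).Nonempty)
    {Q : Finset ι} (hQ : #Q ≤ r) (col : ι → C) (pt : ι → Fin r)
    (hcons : ∀ q ∈ Q, ∀ q' ∈ Q, col q = col q' → pt q = pt q') :
    ∃ e, ∀ q ∈ Q, e ∈ B (col q) (pt q) := by
  classical
  obtain ⟨D, hQD, hD⟩ := exists_superset_card_eq (card_image_le.trans hQ) hC
  let enum := D.equivFinOfCardEq hD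
  let cs : Fin r → C := fun i => enum.symm i
  -- colors not used by `Q` get an arbitrary part
  let js : Fin r → Fin r := fun i => if hi : ∃ q ∈ Q, col q = cs i then pt hi.choose else i
  obtain ⟨e, he⟩ := hB cs (Subtype.val_injective.comp enum.symm.injective) js
  refine ⟨e, fun q hq => ?_⟩
  let i := enum ⟨col q, hQD (mem_image_of_mem col hq)⟩
  have hci : cs i = col q := by simp [cs, i]
  have hi : ∃ q' ∈ Q, col q' = cs i := ⟨q, hq, hci.symm⟩
  have hji : js i = pt q := by
    simp only [js, dif_pos hi]
    exact hcons _ hi.choose_spec.1 _ hq (hi.choose_spec.2.trans hci)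
  simpa only [hci, hji] using Set.mem_iInter.1 he i

section Star

variable {r : ℕ} {V C U : Type} [Finite V] [Fintype C] {part : V → Fin r} {n : Fin r → ℕ}
  {E : Set (Fin r → V)} {π : (Fin r → V) → Fin r → ℕ → C}
  {A : (Fin r → V) → C → Fin r → Set U} {x : V × ℕ → ℝ} {F : Set (V × ℕ)} {h : Fin r → V}

lemma exists_le_starCost_of_consistent (hC : r ≤ Fintype.card C)
    (hAint : ∀ h ∈ E, ∀ cs : Fin r → C, Function.Injective cs → ∀ js : Fin r → Fin r,
      (⋂ i : Fin r, A h (cs i) (js i)).Nonempty)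
    (hx : IsLineEmbedding part n x) (hF : F ⊆ locations part n) (hFne : F.Nonempty)
    (hh : h ∈ E) {Q : Finset (V × ℕ)} (hQcard : #Q = r)
    (hQ : ∀ q ∈ Q, MemEdge h q.1 ∧ q ∈ locations part n ∧ q ∉ F)
    (hcons : ∀ q ∈ Q, ∀ q' ∈ Q,
      π h (part q.1) q.2 = π h (part q'.1) q'.2 → part q.1 = part q'.1) :
    ∃ e, (r : ℝ) ≤ starCost part n E π A x F e := by
  obtain ⟨e, he⟩ := exists_forall_mem_of_consistent hC (hAint h hh) hQcard.le
    (fun q => π h (part q.1) q.2) (fun q => part q.1) hcons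
  subst hQcard
  refine ⟨e, natCast_card_le_finsum_mem
    (locations_finite.subset fun q hq => hq.1) (fun q hq => ?_) (fun p _ => ?_)
    fun q hq => hx.one_le_sInf_abs_sub hF hFne (hQ q hq).2.1 (hQ q hq).2.2⟩
  · exact ⟨(hQ q hq).2.1, h, hh, (hQ q hq).1, he q hq⟩
  · exact Real.sInf_nonneg (by rintro _ ⟨q, -, rfl⟩; exact abs_nonneg _)

lemma exists_le_starCost_of_le_card_missingLabels (hC : r ≤ Fintype.card C)
    (hAint : ∀ h ∈ E, ∀ cs : Fin r → C, Function.Injective cs → ∀ js : Fin r → Fin r,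
      (⋂ i : Fin r, A h (cs i) (js i)).Nonempty)
    (hx : IsLineEmbedding part n x) (hF : F ⊆ locations part n) (hFne : F.Nonempty)
    (hh : h ∈ E) {v : V} (hv : MemEdge h v) (hM : r ≤ #(missingLabels part n F v)) :
    ∃ e, (r : ℝ) ≤ starCost part n E π A x F e := by
  obtain ⟨L, hL, hLcard⟩ := exists_subset_card_eq hM
  refine exists_le_starCost_of_consistent hC hAint hx hF hFne hh
    (Q := L.map ⟨_, Prod.mk_right_injective v⟩) (by rw [card_map, hLcard]) ?_ ?_
  · simp only [mem_map, Function.Embedding.coeFn_mk]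
    rintro _ ⟨ℓ, hℓ, rfl⟩
    exact ⟨hv, mem_missingLabels.1 (hL hℓ)⟩
  · simp only [mem_map, Function.Embedding.coeFn_mk]
    rintro _ ⟨ℓ, -, rfl⟩ _ ⟨ℓ', -, rfl⟩ -
    rfl

def HasCollision (π : (Fin r → V) → Fin r → ℕ → C) (M : V → Finset ℕ) (h : Fin r → V) :
    Prop :=
  ∃ i i', i ≠ i' ∧ ∃ ℓ ∈ M (h i), ∃ ℓ' ∈ M (h i'), π h i ℓ = π h i' ℓ'

lemma exists_le_starCost_of_not_hasCollision (hC : r ≤ Fintype.card C)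
    (hE : ∀ h ∈ E, ∀ i : Fin r, part (h i) = i)
    (hAint : ∀ h ∈ E, ∀ cs : Fin r → C, Function.Injective cs → ∀ js : Fin r → Fin r,
      (⋂ i : Fin r, A h (cs i) (js i)).Nonempty)
    (hx : IsLineEmbedding part n x) (hF : F ⊆ locations part n) (hFne : F.Nonempty)
    (hh : h ∈ E) (hload : r ≤ ∑ i, #(missingLabels part n F (h i)))
    (hfree : ¬ HasCollision π (missingLabels part n F) h) :
    ∃ e, (r : ℝ) ≤ starCost part n E π A x F e := by
  have hinj : Function.Injective h := fun i j hij => by rw [← hE h hh i, hij, hE h hh j]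
  let emb : (Σ _ : Fin r, ℕ) ↪ V × ℕ :=
    ⟨fun p => (h p.1, p.2), fun p q hpq => by
      obtain ⟨hi, hℓ⟩ := Prod.ext_iff.1 hpq
      exact Sigma.ext (hinj hi) (heq_of_eq hℓ)⟩
  let Qall := (univ.sigma fun i => missingLabels part n F (h i)).map emb
  obtain ⟨Q, hQ, hQcard⟩ := exists_subset_card_eq (s := Qall) (by simpa [Qall] using hload)
  have hQmem : ∀ q ∈ Q, ∃ i ℓ, q = (h i, ℓ) ∧ ℓ ∈ missingLabels part n F (h i) := by
    intro q hq
    obtain ⟨⟨i, ℓ⟩, hiℓ, rfl⟩ := mem_map.1 (hQ hq)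
    exact ⟨i, ℓ, rfl, (mem_sigma.1 hiℓ).2⟩
  refine exists_le_starCost_of_consistent hC hAint hx hF hFne hh hQcard (fun q hq => ?_) ?_
  · obtain ⟨i, ℓ, rfl, hℓ⟩ := hQmem q hq
    exact ⟨⟨i, rfl⟩, mem_missingLabels.1 hℓ⟩
  · intro q hq q' hq' hcol
    obtain ⟨i, ℓ, rfl, hℓ⟩ := hQmem q hq
    obtain ⟨i', ℓ', rfl, hℓ'⟩ := hQmem q' hq'
    simp only [hE h hh] at hcol ⊢
    by_contra hii'
    exact hfree ⟨i, i', hii', ℓ, hℓ, ℓ', hℓ', hcol⟩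

end Star

lemma card_le_card_filter_le_mul_succ {ι : Type*} {s : Finset ι} {w : ι → ℕ} {r B : ℕ}
    (hB : ∀ i ∈ s, w i ≤ B) (hsum : r * #s ≤ ∑ i ∈ s, w i) :
    #s ≤ #{i ∈ s | r ≤ w i} * (B + 1) := by
  classical
  have hsplit := sum_filter_add_sum_filter_not s (r ≤ w ·) w
  have hcard := card_filter_add_card_filter_not (s := s) (r ≤ w ·)
  have hhigh : ∑ i ∈ s with r ≤ w i, w i ≤ #{i ∈ s | r ≤ w i} * B := by
    simpa using sum_le_card_nsmul _ w B fun i hi => hB i (mem_filter.1 hi).1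
  have hlow : ∑ i ∈ s with ¬r ≤ w i, (w i + 1) ≤ #{i ∈ s | ¬r ≤ w i} * r := by
    simpa using sum_le_card_nsmul _ (w · + 1) r fun i hi => by
      have := (mem_filter.1 hi).2; omega
  rw [sum_add_distrib, sum_const, smul_eq_mul, mul_one] at hlow
  rw [← hcard, mul_add] at hsum
  nlinarith

lemma exists_fin_cover {r m : ℕ} {s : Finset ℕ} (hs : #s ≤ r) (hsm : s ⊆ Icc 1 m) (hm : 1 ≤ m) :
    ∃ f : Fin r → ℕ, (∀ t, f t ∈ Set.Icc 1 m) ∧ ∀ ℓ ∈ s, ∃ t, f t = ℓ := by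
  refine ⟨fun t => if ht : t.1 < #s then s.equivFin.symm ⟨t, ht⟩ else 1, fun t => ?_,
    fun ℓ hℓ => ⟨Fin.castLE hs (s.equivFin ⟨ℓ, hℓ⟩), by simp⟩⟩
  dsimp only
  split_ifs
  · simpa using hsm (s.equivFin.symm _).2
  · exact ⟨le_rfl, hm⟩

section Hypergraph

variable {r : ℕ} {V C : Type} {part : V → Fin r} {π : (Fin r → V) → Fin r → ℕ → C}

def weaklySatisfied (part : V → Fin r) (E : Set (Fin r → V))
    (π : (Fin r → V) → Fin r → ℕ → C) (σ : V → ℕ) : Set (Fin r → V) :=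
  {h ∈ E | ∃ v v' : V, MemEdge h v ∧ MemEdge h v' ∧ v ≠ v' ∧
    π h (part v) (σ v) = π h (part v') (σ v')}

open Classical in
lemma sum_sum_apply_eq_mul_sum [Fintype V] {E : Finset (Fin r → V)}
    (hE : ∀ h ∈ E, ∀ i, part (h i) = i) {d : ℕ} (hdeg : ∀ v, #{h ∈ E | MemEdge h v} = d)
    (f : V → ℕ) :
    ∑ h ∈ E, ∑ i, f (h i) = d * ∑ v, f v := by
  have hrow : ∀ h ∈ E, ∑ i, f (h i) = ∑ v, if MemEdge h v then f v else 0 := fun h hh => by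
    have hinj : Function.Injective h := fun i j hij => by rw [← hE h hh i, hij, hE h hh j]
    have himage : univ.image h = univ.filter (MemEdge h) := by ext v; simp [MemEdge]
    rw [← sum_filter, ← himage, sum_image fun i _ j _ hij => hinj hij]
  rw [sum_congr rfl hrow, sum_comm, mul_sum]
  simp [← sum_filter, hdeg]

open Classical in
lemma exists_memEdge_of_card_filter_eq {E : Finset (Fin r → V)} {w : V}
    (hreg : ∀ v, #{h ∈ E | MemEdge h v} = #{h ∈ E | MemEdge h w})
    (hw : ∃ h ∈ E, MemEdge h w) (v : V) : ∃ h ∈ E, MemEdge h v := by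
  obtain ⟨h, hh, hhw⟩ := hw
  have : 0 < #{h ∈ E | MemEdge h v} := (hreg v).symm ▸ card_pos.2 ⟨h, mem_filter.2 ⟨hh, hhw⟩⟩
  simpa [Finset.Nonempty] using card_pos.1 this

open Classical in
lemma sum_sum_card_missingLabels_eq [Fintype V] {E : Finset (Fin r → V)}
    (hE : ∀ h ∈ E, ∀ i, part (h i) = i) {d : ℕ} (hdeg : ∀ v, #{h ∈ E | MemEdge h v} = d)
    {n : Fin r → ℕ} {F : Set (V × ℕ)}
    (hM : ∑ v, #(missingLabels part n F v) = Fintype.card V) :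
    ∑ h ∈ E, ∑ i, #(missingLabels part n F (h i)) = r * #E := by
  have hEr : #E * r = d * Fintype.card V := by simpa using sum_sum_apply_eq_mul_sum hE hdeg 1
  calc _ = d * ∑ v, #(missingLabels part n F v) := sum_sum_apply_eq_mul_sum hE hdeg _
    _ = r * #E := by rw [hM, ← hEr, mul_comm]

lemma mem_weaklySatisfied_of_eq {E : Set (Fin r → V)} (hE : ∀ h ∈ E, ∀ i, part (h i) = i)
    {h : Fin r → V} (hh : h ∈ E) {i i' : Fin r} (hii' : i ≠ i') (lab : V → Fin r → ℕ)
    {a b : Fin r} (hcol : π h i (lab (h i) a) = π h i' (lab (h i') b)) :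
    h ∈ weaklySatisfied part E π (fun v => if part v = i' then lab v b else lab v a) := by
  refine ⟨hh, h i, h i', ⟨i, rfl⟩, ⟨i', rfl⟩, fun hv => hii' ?_, ?_⟩
  · rw [← hE h hh i, hv, hE h hh i']
  · simpa [hE h hh, hii'] using hcol

lemma exists_labeling_card_le_pow_four_mul (hr : 0 < r) {E : Finset (Fin r → V)}
    (hE : ∀ h ∈ E, ∀ i, part (h i) = i) {n : Fin r → ℕ} (hn : ∀ j, 1 ≤ n j)
    {M : V → Finset ℕ} (hM : ∀ v, M v ⊆ Icc 1 (n (part v))) (hMr : ∀ v, #(M v) ≤ r)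
    {P : Finset (Fin r → V)} (hPE : P ⊆ E) (hP : ∀ h ∈ P, HasCollision π M h) :
    ∃ σ : V → ℕ, (∀ v, σ v ∈ Set.Icc 1 (n (part v))) ∧
      #P ≤ r ^ 4 * (weaklySatisfied part ↑E π σ).ncard := by
  classical
  choose lab hlab_mem hlab_cover using fun v => exists_fin_cover (hMr v) (hM v) (hn (part v))
  -- an edge is recorded by the two parts and the two label indices of one of its collisions
  let good (h : Fin r → V) (k : Fin r × Fin r × Fin r × Fin r) : Prop :=
    k.1 ≠ k.2.1 ∧ π h k.1 (lab (h k.1) k.2.2.1) = π h k.2.1 (lab (h k.2.1) k.2.2.2)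
  have hcover : P ⊆ univ.biUnion fun k => {h ∈ P | good h k} := fun h hh => by
    obtain ⟨i, i', hii', ℓ, hℓ, ℓ', hℓ', hcol⟩ := hP h hh
    obtain ⟨a, rfl⟩ := hlab_cover _ ℓ hℓ
    obtain ⟨b, rfl⟩ := hlab_cover _ ℓ' hℓ'
    exact mem_biUnion.2 ⟨(i, i', a, b), mem_univ _, mem_filter.2 ⟨hh, hii', hcol⟩⟩
  have : Nonempty (Fin r) := ⟨⟨0, hr⟩⟩
  obtain ⟨⟨i, i', a, b⟩, hmax⟩ := Finite.exists_max fun k => #{h ∈ P | good h k}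
  refine ⟨fun v => if part v = i' then lab v b else lab v a,
    fun v => by dsimp only; split_ifs <;> apply hlab_mem, ?_⟩
  have hfiber : ↑{h ∈ P | good h (i, i', a, b)} ⊆
      weaklySatisfied part ↑E π (fun v => if part v = i' then lab v b else lab v a) :=
    fun h hh => by
      obtain ⟨hhP, hii', hcol⟩ := mem_filter.1 hh
      exact mem_weaklySatisfied_of_eq hE (hPE hhP) hii' lab hcol
  calc #P ≤ ∑ k, #{h ∈ P | good h k} := (card_le_card hcover).trans card_biUnion_le
    _ ≤ ∑ _k : Fin r × Fin r × Fin r × Fin r, #{h ∈ P | good h (i, i', a, b)} :=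
      sum_le_sum fun k _ => hmax k
    _ = r ^ 4 * #{h ∈ P | good h (i, i', a, b)} := by
      rw [sum_const, card_univ, smul_eq_mul, Fintype.card_prod, Fintype.card_prod,
        Fintype.card_prod, Fintype.card_fin]
      ring
    _ ≤ r ^ 4 * _ := Nat.mul_le_mul_left _ <| by
      rw [← Set.ncard_coe_finset]
      exact Set.ncard_le_ncard hfiber (E.finite_toSet.subset fun h hh => hh.1)

lemma card_le_pow_seven_mul_ncard_weaklySatisfied [Fintype V] (hr : 2 ≤ r)
    {E : Finset (Fin r → V)} (hE : ∀ h ∈ E, ∀ i, part (h i) = i) {n : Fin r → ℕ}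
    (hn : ∀ j, 1 ≤ n j) {F : Set (V × ℕ)}
    (hload : ∑ h ∈ E, ∑ i, #(missingLabels part n F (h i)) = r * #E)
    (hsmall : ∀ v, #(missingLabels part n F v) < r)
    (hcoll : ∀ h ∈ E, r ≤ ∑ i, #(missingLabels part n F (h i)) →
      HasCollision π (missingLabels part n F) h) :
    ∃ σ : V → ℕ, (∀ v, σ v ∈ Set.Icc 1 (n (part v))) ∧
      #E ≤ r ^ 7 * (weaklySatisfied part ↑E π σ).ncard := by
  classical
  let P := {h ∈ E | r ≤ ∑ i, #(missingLabels part n F (h i))}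
  have hEP : #E ≤ #P * (r * r + 1) := by
    refine card_le_card_filter_le_mul_succ (fun h _ => ?_) hload.ge
    simpa using sum_le_card_nsmul univ _ r fun i _ => (hsmall (h i)).le
  obtain ⟨σ, hσ, hPσ⟩ := exists_labeling_card_le_pow_four_mul (by omega) hE hn
    (fun v => filter_subset _ _) (fun v => (hsmall v).le) (filter_subset _ E)
    fun h hh => hcoll h (mem_filter.1 hh).1 (mem_filter.1 hh).2
  refine ⟨σ, hσ, ?_⟩
  have hcube : r * r + 1 ≤ r ^ 3 := by nlinarith
  calc #E ≤ #P * r ^ 3 := hEP.trans (Nat.mul_le_mul_left _ hcube)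
    _ ≤ r ^ 4 * (weaklySatisfied part ↑E π σ).ncard * r ^ 3 := Nat.mul_le_mul_right _ hPσ
    _ = r ^ 7 * (weaklySatisfied part ↑E π σ).ncard := by ring

end Hypergraph

theorem stmt12_general {r : ℕ} (hr : 2 ≤ r) {V C U : Type} [Fintype V] [Fintype C]
    (hC : r ≤ Fintype.card C)
    (part : V → Fin r) (E : Set (Fin r → V)) (hEfin : E.Finite) (hEne : E.Nonempty)
    (hE : ∀ h ∈ E, ∀ i : Fin r, part (h i) = i)
    (n : Fin r → ℕ) (hn : ∀ j, 2 ≤ n j)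
    (π : (Fin r → V) → Fin r → ℕ → C)
    (A : (Fin r → V) → C → Fin r → Set U)
    (hAint : ∀ h ∈ E, ∀ cs : Fin r → C, Function.Injective cs → ∀ js : Fin r → Fin r,
      (⋂ i : Fin r, A h (cs i) (js i)).Nonempty)
    (hdeg : ∀ v w : V, ({h ∈ E | MemEdge h v}).ncard = ({h ∈ E | MemEdge h w}).ncard)
    (δ : ℝ) (hδr : (r : ℝ) ^ 7 * δ < 1)
    (hsound : ∀ σ : V → ℕ, (∀ v : V, σ v ∈ Set.Icc 1 (n (part v))) →
      (({h ∈ E | ∃ v v' : V, MemEdge h v ∧ MemEdge h v' ∧ v ≠ v' ∧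
        π h (part v) (σ v) = π h (part v') (σ v')}).ncard : ℝ) ≤ δ * (E.ncard : ℝ))
    (x : V × ℕ → ℝ)
    (hx1 : ∀ v : V, ∀ ℓ ∈ Set.Icc 1 (n (part v)), ∀ ℓ' ∈ Set.Icc 1 (n (part v)),
      |x (v, ℓ) - x (v, ℓ')| = |(ℓ : ℝ) - (ℓ' : ℝ)|)
    (hx2 : ∀ v v' : V, v ≠ v' → ∀ ℓ ∈ Set.Icc 1 (n (part v)),
      ∀ ℓ' ∈ Set.Icc 1 (n (part v')), (2 : ℝ) ≤ |x (v, ℓ) - x (v', ℓ')|) :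
    ∀ F : Set (V × ℕ), F ⊆ {q : V × ℕ | q.2 ∈ Set.Icc 1 (n (part q.1))} →
      F.ncard = (∑ v : V, n (part v)) - Fintype.card V →
      ∃ e : U, (r : ℝ) ≤
        ∑ᶠ p ∈ {q : V × ℕ | q.2 ∈ Set.Icc 1 (n (part q.1)) ∧ e ∈ Xset part E π A q.1 q.2},
          sInf ((fun q : V × ℕ => |x p - x q|) '' F) := by
  classical
  intro F hF hFcard
  lift E to Finset (Fin r → V) using hEfin
  have : NeZero r := ⟨by omega⟩
  obtain ⟨h₀, hh₀⟩ := hEne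
  have : Nonempty V := ⟨h₀ 0⟩
  have hreg : ∀ v, #{h ∈ E | MemEdge h v} = #{h ∈ E | MemEdge h (h₀ 0)} := fun v => by
    simpa [← coe_filter] using hdeg v (h₀ 0)
  have hx : IsLineEmbedding part n x := ⟨hx1, hx2⟩
  have hFne := nonempty_of_ncard_eq_sum_sub hn hFcard
  have hload := sum_sum_card_missingLabels_eq hE hreg
    (sum_card_missingLabels_eq_card hF (fun j => (hn j).trans' one_le_two) hFcard)
  by_cases hbig : ∃ v, r ≤ #(missingLabels part n F v)
  · obtain ⟨v, hv⟩ := hbig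
    obtain ⟨h, hh, hvh⟩ := exists_memEdge_of_card_filter_eq hreg ⟨h₀, hh₀, 0, rfl⟩ v
    exact exists_le_starCost_of_le_card_missingLabels hC hAint hx hF hFne hh hvh hv
  by_cases hfree : ∃ h ∈ E, r ≤ ∑ i, #(missingLabels part n F (h i)) ∧
      ¬HasCollision π (missingLabels part n F) h
  · obtain ⟨h, hh, hhr, hh_free⟩ := hfree
    exact exists_le_starCost_of_not_hasCollision hC hE hAint hx hF hFne hh hhr hh_free
  push Not at hbig hfree
  obtain ⟨σ, hσ, hEσ⟩ := card_le_pow_seven_mul_ncard_weaklySatisfied hr hE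
    (fun j => (hn j).trans' one_le_two) hload hbig hfree
  have hsat : ((weaklySatisfied part ↑E π σ).ncard : ℝ) ≤ δ * #E := by
    rw [← Set.ncard_coe_finset]
    exact hsound σ hσ
  have hEpos : (0 : ℝ) < #E := by exact_mod_cast card_pos.2 ⟨h₀, hh₀⟩
  have hEσ' : (#E : ℝ) ≤ r ^ 7 * (weaklySatisfied part ↑E π σ).ncard := by exact_mod_cast hEσ
  nlinarith [mul_le_mul_of_nonneg_left hsat (by positivity : (0 : ℝ) ≤ r ^ 7)]

/-- **No-instance lemma (line metric).**
In the Setup, assume: `r ≥ 2`; `|C| ≥ r`; each `{(A h c 1, …, A h c r)}_{c ∈ C}` is an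
`(r,C)`-partition system on `Uh h`; `E` is (finite and) nonempty; the label sets are
initial segments `L_j = {1, …, n j}` with `n j ≥ 2`; every vertex of `G` has the same
degree; for some real `δ ≥ 0` with `r⁷·δ < 1`, every labeling weakly satisfies at most
`δ·|E|` edges; and the locations `(v,ℓ)` are embedded on the real line by `x` with
`|x(v,ℓ) − x(v,ℓ')| = |ℓ − ℓ'|` within a vertex and `|x(v,ℓ) − x(v',ℓ')| ≥ 2` across
vertices. With `S(e) = {(v,ℓ) : ℓ ∈ L_{j(v)}, e ∈ X(v,ℓ)}`, every facility set `F` of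
locations with `|F| = (Σ_{v} |L_{j(v)}|) − |𝒱|` admits an element `e ∈ U` with
`Σ_{p ∈ S(e)} min_{q ∈ F} |x p − x q| ≥ r`. -/
theorem stmt12 {r : ℕ} (hr : 2 ≤ r) {V C U : Type} [Fintype V] [Fintype C]
    (hC : r ≤ Fintype.card C)
    (part : V → Fin r) (E : Set (Fin r → V)) (hEfin : E.Finite) (hEne : E.Nonempty)
    (hE : ∀ h ∈ E, ∀ i : Fin r, part (h i) = i)
    (n : Fin r → ℕ) (hn : ∀ j, 2 ≤ n j)
    (π : (Fin r → V) → Fin r → ℕ → C)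
    (Uh : (Fin r → V) → Set U) (hUfin : ∀ h ∈ E, (Uh h).Finite)
    (hUdisj : ∀ h ∈ E, ∀ h' ∈ E, h ≠ h' → Disjoint (Uh h) (Uh h'))
    (hUcover : ∀ e : U, ∃ h ∈ E, e ∈ Uh h)
    (A : (Fin r → V) → C → Fin r → Set U)
    (hApart : ∀ h ∈ E, ∀ c : C, (⋃ j : Fin r, A h c j) = Uh h)
    (hAdisj : ∀ h ∈ E, ∀ c : C, ∀ j j' : Fin r, j ≠ j' → Disjoint (A h c j) (A h c j'))
    (hAint : ∀ h ∈ E, ∀ cs : Fin r → C, Function.Injective cs → ∀ js : Fin r → Fin r,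
      (⋂ i : Fin r, A h (cs i) (js i)).Nonempty)
    (hdeg : ∀ v w : V, ({h ∈ E | MemEdge h v}).ncard = ({h ∈ E | MemEdge h w}).ncard)
    (δ : ℝ) (hδ : 0 ≤ δ) (hδr : (r : ℝ) ^ 7 * δ < 1)
    (hsound : ∀ σ : V → ℕ, (∀ v : V, σ v ∈ Set.Icc 1 (n (part v))) →
      (({h ∈ E | ∃ v v' : V, MemEdge h v ∧ MemEdge h v' ∧ v ≠ v' ∧
        π h (part v) (σ v) = π h (part v') (σ v')}).ncard : ℝ) ≤ δ * (E.ncard : ℝ))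
    (x : V × ℕ → ℝ)
    (hx1 : ∀ v : V, ∀ ℓ ∈ Set.Icc 1 (n (part v)), ∀ ℓ' ∈ Set.Icc 1 (n (part v)),
      |x (v, ℓ) - x (v, ℓ')| = |(ℓ : ℝ) - (ℓ' : ℝ)|)
    (hx2 : ∀ v v' : V, v ≠ v' → ∀ ℓ ∈ Set.Icc 1 (n (part v)),
      ∀ ℓ' ∈ Set.Icc 1 (n (part v')), (2 : ℝ) ≤ |x (v, ℓ) - x (v', ℓ')|) :
    ∀ F : Set (V × ℕ), F ⊆ {q : V × ℕ | q.2 ∈ Set.Icc 1 (n (part q.1))} →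
      F.ncard = (∑ v : V, n (part v)) - Fintype.card V →
      ∃ e : U, (r : ℝ) ≤
        ∑ᶠ p ∈ {q : V × ℕ | q.2 ∈ Set.Icc 1 (n (part q.1)) ∧ e ∈ Xset part E π A q.1 q.2},
          sInf ((fun q : V × ℕ => |x p - x q|) '' F) :=
  stmt12_general hr hC part E hEfin hEne hE n hn π A hAint hdeg δ hδr hsound x hx1 hx2
end
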